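/- arXiv:1911.02840 — 7 statements merged into one kernel-verified Lean document; each statement's English description precedes it below -/
import Mathlib

section
/- Let f_0, …, f_{n-1} be complex-valued functions analytic on the open unit disc Δ = {z ∈ ℂ : |z| < 1}, and let z_0, …, z_{n-1} be arbitrary complex numbers. Then there exists a function y : Δ → ℂ, analytic on all of Δ, satisfying the differential equation y^{(n)}(z) + f_{n-1}(z) y^{(n-1)}(z) + ⋯ + f_1(z) y'(z) + f_0(z) y(z) = 0 for all z ∈ Δ, and such that the j-th derivative of y at 0 equals z_j for every j with 0 ≤ j ≤ n-1. -/
open Metric intervalIntegral Set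

section SegPrimitive
variable {E : Type*} [NormedAddCommGroup E] [NormedSpace ℂ E] [CompleteSpace E]

/-- Derivative of the integral along the segment from `0` to `z` of a holomorphic function. -/
lemma seg_hasDerivAt {g : ℂ → E} (hg : ∀ z ∈ ball (0:ℂ) 1, DifferentiableAt ℂ g z)
    {z : ℂ} (hz : z ∈ ball (0:ℂ) 1) :
    HasDerivAt (fun w : ℂ => ∫ t in (0:ℝ)..1, w • g ((t:ℂ) * w)) (g z) z := by
  have hgo : DifferentiableOn ℂ g (ball (0:ℂ) 1) :=
    fun x hx => (hg x hx).differentiableWithinAt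
  have hgc : ContinuousOn g (ball (0:ℂ) 1) := hgo.continuousOn
  have hg' : DifferentiableOn ℂ (deriv g) (ball (0:ℂ) 1) :=
    ((hgo.analyticOnNhd isOpen_ball).deriv).differentiableOn
  have hg'c : ContinuousOn (deriv g) (ball (0:ℂ) 1) := hg'.continuousOn
  rw [mem_ball_zero_iff] at hz
  set r : ℝ := (‖z‖ + 1) / 2 with hr
  have hr0 : 0 ≤ r := by positivity
  have hzr : ‖z‖ < r := by rw [hr]; linarith
  have hr1 : r < 1 := by rw [hr]; linarith
  have hsub : closedBall (0:ℂ) r ⊆ ball (0:ℂ) 1 := closedBall_subset_ball hr1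
  obtain ⟨C₁, hC₁⟩ := (isCompact_closedBall (0:ℂ) r).exists_bound_of_continuousOn
    (hgc.mono hsub)
  obtain ⟨C₂, hC₂⟩ := (isCompact_closedBall (0:ℂ) r).exists_bound_of_continuousOn
    (hg'c.mono hsub)
  set ε : ℝ := r - ‖z‖ with hε
  have hεpos : 0 < ε := by rw [hε]; linarith
  have hmem : ∀ w ∈ ball z ε, ∀ t : ℝ, |t| ≤ 1 → (t:ℂ) * w ∈ closedBall (0:ℂ) r := by
    intro w hw t ht
    rw [mem_closedBall_zero_iff, norm_mul, Complex.norm_real, Real.norm_eq_abs]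
    have hw' : ‖w‖ < r := by
      have h1 := norm_sub_norm_le w z
      have h2 := mem_ball_iff_norm.mp hw
      linarith
    calc |t| * ‖w‖ ≤ 1 * ‖w‖ := by
          apply mul_le_mul_of_nonneg_right ht (norm_nonneg w)
      _ ≤ r := by linarith
  have habs : ∀ t : ℝ, t ∈ uIcc (0:ℝ) 1 → |t| ≤ 1 := by
    intro t ht
    rw [uIcc_of_le zero_le_one] at ht
    rw [abs_le]; exact ⟨by linarith [ht.1], ht.2⟩
  -- continuity of the integrand in t, for w near z
  have hcont : ∀ w ∈ ball z ε, ContinuousOn (fun t : ℝ => w • g ((t:ℂ) * w))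
      (uIcc (0:ℝ) 1) := by
    intro w hw
    apply ContinuousOn.smul continuousOn_const
    apply (hgc.mono hsub).comp
    · exact (Complex.continuous_ofReal.mul continuous_const).continuousOn
    · intro t ht; exact hmem w hw t (habs t ht)
  set F' : ℂ → ℝ → E := fun w t => g ((t:ℂ)*w) + ((t:ℂ)*w) • deriv g ((t:ℂ)*w) with hF'
  have hcont' : ∀ w ∈ ball z ε, ContinuousOn (fun t : ℝ => F' w t) (uIcc (0:ℝ) 1) := by
    intro w hw
    have hmaps : MapsTo (fun t : ℝ => (t:ℂ)*w) (uIcc (0:ℝ) 1) (closedBall (0:ℂ) r) :=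
      fun t ht => hmem w hw t (habs t ht)
    have h1 : ContinuousOn (fun t : ℝ => (t:ℂ)*w) (uIcc (0:ℝ) 1) :=
      (Complex.continuous_ofReal.mul continuous_const).continuousOn
    exact ((hgc.mono hsub).comp h1 hmaps).add
      (h1.smul ((hg'c.mono hsub).comp h1 hmaps))
  have key := hasDerivAt_integral_of_dominated_loc_of_deriv_le (μ := MeasureTheory.volume)
      (F := fun w t => w • g ((t:ℂ)*w)) (F' := F') (x₀ := z) (a := 0) (b := 1)
      (bound := fun _ => C₁ + r * C₂) (s := ball z ε) (ball_mem_nhds z hεpos)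
      (Filter.eventually_of_mem (ball_mem_nhds z hεpos) fun w hw =>
        ((hcont w hw).mono uIoc_subset_uIcc).aestronglyMeasurable measurableSet_uIoc)
      ((hcont z (mem_ball_self hεpos)).intervalIntegrable)
      (((hcont' z (mem_ball_self hεpos)).mono uIoc_subset_uIcc).aestronglyMeasurable
        measurableSet_uIoc)
      ?_ intervalIntegrable_const ?_
  · convert key.2 using 1
    -- ∫ t in 0..1, F' z t = g z
    have hψ : ∀ t ∈ uIcc (0:ℝ) 1,
        HasDerivAt (fun t : ℝ => ((t:ℝ):ℂ) • g ((t:ℂ)*z)) (F' z t) t := by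
      intro t ht
      have hofReal : HasDerivAt (fun t : ℝ => ((t:ℝ):ℂ)) 1 t := by
        exact Complex.ofRealCLM.hasDerivAt (x := t)
      have hmul : HasDerivAt (fun t : ℝ => ((t:ℝ):ℂ) * z) z t := by
        simpa using hofReal.mul_const z
      have htz : (t:ℂ) * z ∈ ball (0:ℂ) 1 := by
        apply hsub
        rw [mem_closedBall_zero_iff, norm_mul, Complex.norm_real, Real.norm_eq_abs]
        calc |t| * ‖z‖ ≤ 1 * ‖z‖ :=
              mul_le_mul_of_nonneg_right (habs t ht) (norm_nonneg z)
          _ ≤ r := by linarith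
      have hcomp : HasDerivAt (fun t : ℝ => g ((t:ℂ)*z)) (z • deriv g ((t:ℂ)*z)) t :=
        HasDerivAt.scomp t ((hg _ htz).hasDerivAt) hmul
      have := hofReal.fun_smul hcomp
      convert this using 1
      rw [hF']
      simp only [one_smul, smul_smul]
      abel
    rw [integral_eq_sub_of_hasDerivAt hψ ((hcont' z (mem_ball_self hεpos)).intervalIntegrable)]
    simp
  · -- bound
    filter_upwards with t
    intro ht w hw
    have htle : |t| ≤ 1 := by
      have := uIoc_subset_uIcc ht
      exact habs t this
    have h1 : (t:ℂ)*w ∈ closedBall (0:ℂ) r := hmem w hw t htle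
    rw [hF']
    refine (norm_add_le _ _).trans (add_le_add (hC₁ _ h1) ?_)
    rw [norm_smul]
    apply mul_le_mul (mem_closedBall_zero_iff.mp h1) (hC₂ _ h1) (norm_nonneg _) hr0
  · -- differentiability in w
    filter_upwards with t
    intro ht w hw
    have htle : |t| ≤ 1 := habs t (uIoc_subset_uIcc ht)
    have h1 : (t:ℂ)*w ∈ ball (0:ℂ) 1 := hsub (hmem w hw t htle)
    have hinner : HasDerivAt (fun x : ℂ => (t:ℂ)*x) (t:ℂ) w := by
      simpa using (hasDerivAt_id w).const_mul (t:ℂ)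
    have hcomp : HasDerivAt (fun x : ℂ => g ((t:ℂ)*x)) ((t:ℂ) • deriv g ((t:ℂ)*w)) w :=
      HasDerivAt.scomp w ((hg _ h1).hasDerivAt) hinner
    have := (hasDerivAt_id' w).fun_smul hcomp
    convert this using 1
    rw [hF']
    simp only [one_smul, smul_smul, id_eq]
    rw [mul_comm w ((t:ℝ):ℂ)]; abel

end SegPrimitive

namespace CauchyODE

variable (n : ℕ) (f : Fin n → ℂ → ℂ)

noncomputable def vf (z : ℂ) (w : Fin n → ℂ) : Fin n → ℂ :=
  fun i => if h : (i:ℕ)+1 < n then w ⟨(i:ℕ)+1, h⟩ else -∑ j, f j z * w j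

lemma vf_sub (z : ℂ) (w₁ w₂ : Fin n → ℂ) :
    vf n f z (w₁ - w₂) = vf n f z w₁ - vf n f z w₂ := by
  funext i
  simp only [vf, Pi.sub_apply]
  split_ifs with h
  · rfl
  · simp [mul_sub, Finset.sum_sub_distrib]
    ring

lemma vf_sum {ι : Type*} (s : Finset ι) (w : ι → Fin n → ℂ) (z : ℂ) :
    vf n f z (∑ k ∈ s, w k) = ∑ k ∈ s, vf n f z (w k) := by
  funext i
  simp only [vf, Finset.sum_apply]
  split_ifs with h
  · rfl
  · simp only [Finset.sum_apply, Finset.mul_sum]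
    rw [Finset.sum_neg_distrib]
    congr 1
    exact Finset.sum_comm

lemma vf_norm_le (z : ℂ) (w : Fin n → ℂ) :
    ‖vf n f z w‖ ≤ (1 + ∑ j, ‖f j z‖) * ‖w‖ := by
  have hS : (0:ℝ) ≤ ∑ j, ‖f j z‖ := Finset.sum_nonneg fun j _ => norm_nonneg _
  apply pi_norm_le_iff_of_nonneg (by positivity) |>.2
  intro i
  simp only [vf]
  split_ifs with h
  · calc ‖w ⟨(i:ℕ)+1, h⟩‖ ≤ ‖w‖ := norm_le_pi_norm w _
      _ ≤ (1 + ∑ j, ‖f j z‖) * ‖w‖ := by nlinarith [norm_nonneg w]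
  · rw [norm_neg]
    calc ‖∑ j, f j z * w j‖ ≤ ∑ j, ‖f j z * w j‖ := norm_sum_le _ _
      _ ≤ ∑ j, ‖f j z‖ * ‖w‖ := by
          apply Finset.sum_le_sum
          intro j _
          rw [norm_mul]
          exact mul_le_mul_of_nonneg_left (norm_le_pi_norm w j) (norm_nonneg _)
      _ = (∑ j, ‖f j z‖) * ‖w‖ := by rw [Finset.sum_mul]
      _ ≤ (1 + ∑ j, ‖f j z‖) * ‖w‖ := by nlinarith [norm_nonneg w]

lemma vf_diff (hf : ∀ i : Fin n, ∀ z ∈ ball (0 : ℂ) 1, DifferentiableAt ℂ (f i) z)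
    {h : ℂ → Fin n → ℂ} (hh : ∀ z ∈ ball (0:ℂ) 1, DifferentiableAt ℂ h z) :
    ∀ z ∈ ball (0:ℂ) 1, DifferentiableAt ℂ (fun z => vf n f z (h z)) z := by
  intro z hz
  rw [differentiableAt_pi]
  intro i
  simp only [vf]
  split_ifs with hi
  · exact differentiableAt_pi.1 (hh z hz) _
  · apply DifferentiableAt.neg
    apply DifferentiableAt.fun_sum
    intro j _
    exact (hf j z hz).mul (differentiableAt_pi.1 (hh z hz) j)

/-- A bound for the vector field on each closed subdisc. -/
lemma vf_bound (hf : ∀ i : Fin n, ∀ z ∈ ball (0 : ℂ) 1, DifferentiableAt ℂ (f i) z)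
    {r : ℝ} (hr1 : r < 1) : ∃ M : ℝ, 1 ≤ M ∧
    ∀ ζ ∈ closedBall (0:ℂ) r, ∀ w, ‖vf n f ζ w‖ ≤ M * ‖w‖ := by
  have hsub : closedBall (0:ℂ) r ⊆ ball (0:ℂ) 1 := closedBall_subset_ball hr1
  have hcont : ContinuousOn (fun ζ => ∑ j, ‖f j ζ‖) (closedBall (0:ℂ) r) := by
    refine continuousOn_finset_sum _ (fun j _ => ContinuousOn.norm ?_)
    exact fun x hx => ((hf j x (hsub hx)).continuousAt).continuousWithinAt
  obtain ⟨C, hC⟩ := (isCompact_closedBall (0:ℂ) r).exists_bound_of_continuousOn hcont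
  refine ⟨1 + max C 0, by simp [le_max_right], ?_⟩
  intro ζ hζ w
  calc ‖vf n f ζ w‖ ≤ (1 + ∑ j, ‖f j ζ‖) * ‖w‖ := vf_norm_le n f ζ w
    _ ≤ (1 + max C 0) * ‖w‖ := by
        apply mul_le_mul_of_nonneg_right _ (norm_nonneg w)
        have := hC ζ hζ
        rw [Real.norm_eq_abs] at this
        have h2 := le_abs_self (∑ j, ‖f j ζ‖)
        have h3 := le_max_left C 0
        gcongr
        linarith

theorem exists_system_solution
    (hf : ∀ i : Fin n, ∀ z ∈ ball (0 : ℂ) 1, DifferentiableAt ℂ (f i) z)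
    (c : Fin n → ℂ) :
    ∃ Y : ℂ → Fin n → ℂ, Y 0 = c ∧
      ∀ z ∈ ball (0:ℂ) 1, HasDerivAt Y (vf n f z (Y z)) z := by
  classical
  -- Picard iterates
  let u : ℕ → ℂ → Fin n → ℂ := fun k => Nat.rec (fun _ => c)
    (fun _ uk => fun z => ∫ t in (0:ℝ)..1, z • vf n f ((t:ℂ)*z) (uk ((t:ℂ)*z))) k
  have hu0 : u 0 = fun _ => c := rfl
  have husucc : ∀ k, u (k+1) =
      fun z => ∫ t in (0:ℝ)..1, z • vf n f ((t:ℂ)*z) (u k ((t:ℂ)*z)) := fun _ => rfl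
  -- differentiability of the iterates
  have hudiff : ∀ k, ∀ z ∈ ball (0:ℂ) 1, DifferentiableAt ℂ (u k) z := by
    intro k
    induction k with
    | zero => intro z _; rw [hu0]; exact differentiableAt_const c
    | succ k ih =>
      intro z hz
      rw [husucc k]
      exact (seg_hasDerivAt (g := fun ζ => vf n f ζ (u k ζ))
        (vf_diff n f hf ih) hz).differentiableAt
  -- uniform bounds on the iterates
  have hubound : ∀ (r M : ℝ), 1 ≤ M →
      (∀ ζ ∈ closedBall (0:ℂ) r, ∀ w, ‖vf n f ζ w‖ ≤ M * ‖w‖) →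
      r < 1 → ∀ k, ∀ z ∈ closedBall (0:ℂ) r,
      ‖u k z‖ ≤ ‖c‖ * (M*‖z‖)^k / (k.factorial : ℝ) := by
    intro r M hM1 hM hr1 k
    have hM0 : (0:ℝ) ≤ M := by linarith
    induction k with
    | zero => intro z hz; simp [hu0]
    | succ k ih =>
      intro z hz
      have hz' : ‖z‖ ≤ r := mem_closedBall_zero_iff.mp hz
      have hfac : (0:ℝ) < (k.factorial : ℝ) := by
        exact_mod_cast k.factorial_pos
      have hCst : (0:ℝ) ≤ ‖z‖ * (M * (‖c‖ * (M*‖z‖)^k / (k.factorial:ℝ))) := by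
        apply mul_nonneg (norm_nonneg z)
        apply mul_nonneg hM0
        apply div_nonneg _ hfac.le
        exact mul_nonneg (norm_nonneg c) (pow_nonneg (mul_nonneg hM0 (norm_nonneg z)) k)
      rw [husucc k]
      have hb : ∀ t ∈ Set.uIoc (0:ℝ) 1, ‖z • vf n f ((t:ℂ)*z) (u k ((t:ℂ)*z))‖
          ≤ (‖z‖ * (M * (‖c‖ * (M*‖z‖)^k / (k.factorial:ℝ)))) * t^k := by
        intro t ht
        rw [uIoc_of_le zero_le_one] at ht
        have ht0 : 0 < t := ht.1
        have ht1 : t ≤ 1 := ht.2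
        have hnorm : ‖(t:ℂ)*z‖ = t * ‖z‖ := by
          rw [norm_mul, Complex.norm_real, Real.norm_eq_abs, abs_of_pos ht0]
        have hmemtz : ((t:ℂ)*z) ∈ closedBall (0:ℂ) r := by
          rw [mem_closedBall_zero_iff, hnorm]
          nlinarith [norm_nonneg z]
        have h1 := hM _ hmemtz (u k ((t:ℂ)*z))
        have h2 := ih _ hmemtz
        rw [norm_smul]
        calc ‖z‖ * ‖vf n f ((t:ℂ)*z) (u k ((t:ℂ)*z))‖
            ≤ ‖z‖ * (M * ‖u k ((t:ℂ)*z)‖) :=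
              mul_le_mul_of_nonneg_left h1 (norm_nonneg z)
          _ ≤ ‖z‖ * (M * (‖c‖ * (M*‖(t:ℂ)*z‖)^k / (k.factorial:ℝ))) := by gcongr
          _ = (‖z‖ * (M * (‖c‖ * (M*‖z‖)^k / (k.factorial:ℝ)))) * t^k := by
              rw [hnorm, mul_pow, mul_pow]
              ring
      have hInt : IntervalIntegrable
          (fun t : ℝ => (‖z‖ * (M * (‖c‖ * (M*‖z‖)^k / (k.factorial:ℝ)))) * t^k)
          MeasureTheory.volume 0 1 :=
        (continuous_const.mul (continuous_pow k)).intervalIntegrable _ _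
      have hmain := intervalIntegral.norm_integral_le_of_norm_le zero_le_one
        (Filter.Eventually.of_forall fun t ht => hb t (by rwa [uIoc_of_le zero_le_one])) hInt
      refine hmain.trans ?_
      rw [intervalIntegral.integral_const_mul, integral_pow]
      rw [one_pow, zero_pow (Nat.succ_ne_zero k), sub_zero]
      apply le_of_eq
      have hk1 : ((k:ℝ)+1) ≠ 0 := by positivity
      rw [Nat.factorial_succ]
      push_cast
      field_simp
      ring
  -- pointwise summability
  have husum : ∀ z ∈ ball (0:ℂ) 1, Summable (fun k => u k z) := by
    intro z hz
    rw [mem_ball_zero_iff] at hz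
    set r : ℝ := (‖z‖ + 1) / 2 with hrdef
    have hr1 : r < 1 := by rw [hrdef]; linarith
    obtain ⟨M, hM1, hM⟩ := vf_bound n f hf hr1
    apply Summable.of_norm_bounded (g := fun k => ‖c‖ * (M*‖z‖)^k / (k.factorial:ℝ))
    · have := (Real.summable_pow_div_factorial (M*‖z‖)).mul_left ‖c‖
      simpa [mul_div_assoc] using this
    · intro k
      apply hubound r M hM1 hM hr1 k z
      rw [mem_closedBall_zero_iff]
      rw [hrdef]; linarith
  set Y : ℂ → Fin n → ℂ := fun z => ∑' k, u k z with hYdef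
  -- locally uniform convergence and differentiability of Y
  have hTU : ∀ (r M : ℝ), 0 ≤ r → r < 1 → 1 ≤ M →
      (∀ ζ ∈ closedBall (0:ℂ) r, ∀ w, ‖vf n f ζ w‖ ≤ M * ‖w‖) →
      TendstoUniformlyOn (fun m z => ∑ k ∈ Finset.range m, u k z) Y
        Filter.atTop (closedBall (0:ℂ) r) := by
    intro r M hr0 hr1 hM1 hM
    apply tendstoUniformlyOn_tsum_nat (u := fun k => ‖c‖ * (M*r)^k / (k.factorial:ℝ))
    · have := (Real.summable_pow_div_factorial (M*r)).mul_left ‖c‖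
      simpa [mul_div_assoc] using this
    · intro k x hx
      refine (hubound r M hM1 hM hr1 k x hx).trans ?_
      have hx' : ‖x‖ ≤ r := mem_closedBall_zero_iff.mp hx
      gcongr
  have hYdiffAt : ∀ z ∈ ball (0:ℂ) 1, DifferentiableAt ℂ Y z := by
    have : TendstoLocallyUniformlyOn (fun m z => ∑ k ∈ Finset.range m, u k z) Y
        Filter.atTop (ball (0:ℂ) 1) := by
      rw [tendstoLocallyUniformlyOn_iff_forall_isCompact isOpen_ball]
      intro K hK hKc
      obtain ⟨r, hr0, hr1, hKr⟩ : ∃ r : ℝ, 0 ≤ r ∧ r < 1 ∧ K ⊆ closedBall (0:ℂ) r := by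
        rcases K.eq_empty_or_nonempty with h | hne
        · exact ⟨0, le_refl _, one_pos, by simp [h]⟩
        · obtain ⟨x₀, hx₀K, hmax⟩ := hKc.exists_isMaxOn hne continuous_norm.continuousOn
          refine ⟨‖x₀‖, norm_nonneg _, mem_ball_zero_iff.mp (hK hx₀K), ?_⟩
          intro x hx
          exact mem_closedBall_zero_iff.mpr (hmax hx)
      obtain ⟨M, hM1, hM⟩ := vf_bound n f hf hr1
      exact (hTU r M hr0 hr1 hM1 hM).mono hKr
    have hdo : DifferentiableOn ℂ Y (ball (0:ℂ) 1) := by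
      apply this.differentiableOn ?_ isOpen_ball
      filter_upwards with m
      exact fun z hz => (DifferentiableAt.fun_sum
        (fun k _ => hudiff k z hz)).differentiableWithinAt
    exact fun z hz => hdo.differentiableAt (isOpen_ball.mem_nhds hz)
  -- the fixed point equation
  have hfix : ∀ z ∈ ball (0:ℂ) 1,
      Y z = c + ∫ t in (0:ℝ)..1, z • vf n f ((t:ℂ)*z) (Y ((t:ℂ)*z)) := by
    intro z hz
    have hz1 := mem_ball_zero_iff.mp hz
    set r : ℝ := (‖z‖ + 1) / 2 with hrdef
    have hr0 : 0 ≤ r := by positivity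
    have hzr : ‖z‖ < r := by rw [hrdef]; linarith
    have hr1 : r < 1 := by rw [hrdef]; linarith
    have hsub : closedBall (0:ℂ) r ⊆ ball (0:ℂ) 1 := closedBall_subset_ball hr1
    obtain ⟨M, hM1, hM⟩ := vf_bound n f hf hr1
    have hM0 : (0:ℝ) ≤ M := by linarith
    have hmemt : ∀ t ∈ uIcc (0:ℝ) 1, ((t:ℂ)*z) ∈ closedBall (0:ℂ) r := by
      intro t ht
      rw [uIcc_of_le zero_le_one] at ht
      rw [mem_closedBall_zero_iff, norm_mul, Complex.norm_real, Real.norm_eq_abs,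
        abs_of_nonneg ht.1]
      nlinarith [norm_nonneg z, ht.2, hzr.le]
    have hcont : ∀ (h : ℂ → Fin n → ℂ), (∀ x ∈ ball (0:ℂ) 1, DifferentiableAt ℂ h x) →
        ContinuousOn (fun t : ℝ => z • vf n f ((t:ℂ)*z) (h ((t:ℂ)*z)))
          (uIcc (0:ℝ) 1) := by
      intro h hh
      apply ContinuousOn.fun_smul continuousOn_const
      have hcv : ContinuousOn (fun ζ => vf n f ζ (h ζ)) (ball (0:ℂ) 1) :=
        fun x hx => ((vf_diff n f hf hh) x hx).continuousAt.continuousWithinAt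
      exact hcv.comp ((Complex.continuous_ofReal.mul continuous_const).continuousOn)
        (fun t ht => hsub (hmemt t ht))
    have hstep : ∀ m, (∑ k ∈ Finset.range (m+1), u k z)
        = c + ∫ t in (0:ℝ)..1, z • vf n f ((t:ℂ)*z)
            (∑ k ∈ Finset.range m, u k ((t:ℂ)*z)) := by
      intro m
      calc ∑ k ∈ Finset.range (m+1), u k z
          = (∑ k ∈ Finset.range m, u (k+1) z) + u 0 z := Finset.sum_range_succ' _ m
        _ = c + ∑ k ∈ Finset.range m,
              ∫ t in (0:ℝ)..1, z • vf n f ((t:ℂ)*z) (u k ((t:ℂ)*z)) := by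
            rw [add_comm]
            simp only [husucc, hu0]
        _ = c + ∫ t in (0:ℝ)..1, ∑ k ∈ Finset.range m,
              z • vf n f ((t:ℂ)*z) (u k ((t:ℂ)*z)) := by
            congr 1
            exact (intervalIntegral.integral_finset_sum
              (fun k _ => (hcont (u k) (hudiff k)).intervalIntegrable)).symm
        _ = c + ∫ t in (0:ℝ)..1, z • vf n f ((t:ℂ)*z)
              (∑ k ∈ Finset.range m, u k ((t:ℂ)*z)) := by
            congr 1
            apply intervalIntegral.integral_congr
            intro t _
            simp only [vf_sum, Finset.smul_sum]
    have hLHS : Filter.Tendsto (fun m => ∑ k ∈ Finset.range (m+1), u k z)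
        Filter.atTop (nhds (Y z)) :=
      ((husum z hz).hasSum.tendsto_sum_nat).comp (Filter.tendsto_add_atTop_nat 1)
    have hRHS : Filter.Tendsto (fun m => c + ∫ t in (0:ℝ)..1, z • vf n f ((t:ℂ)*z)
        (∑ k ∈ Finset.range m, u k ((t:ℂ)*z))) Filter.atTop
        (nhds (c + ∫ t in (0:ℝ)..1, z • vf n f ((t:ℂ)*z) (Y ((t:ℂ)*z)))) := by
      apply Filter.Tendsto.const_add
      rw [Metric.tendsto_atTop]
      intro ε hε
      have hε' : 0 < ε / (M+1) := by positivity
      have hunif := (Metric.tendstoUniformlyOn_iff.mp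
        (hTU r M hr0 hr1 hM1 hM)) (ε/(M+1)) hε'
      rw [Filter.eventually_atTop] at hunif
      obtain ⟨N, hN⟩ := hunif
      refine ⟨N, fun m hm => ?_⟩
      rw [dist_eq_norm]
      have hint1 : IntervalIntegrable (fun t : ℝ => z • vf n f ((t:ℂ)*z)
          (∑ k ∈ Finset.range m, u k ((t:ℂ)*z))) MeasureTheory.volume 0 1 :=
        (hcont _ (fun x hx => DifferentiableAt.fun_sum
          fun k _ => hudiff k x hx)).intervalIntegrable
      have hint2 : IntervalIntegrable (fun t : ℝ => z • vf n f ((t:ℂ)*z)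
          (Y ((t:ℂ)*z))) MeasureTheory.volume 0 1 :=
        (hcont Y hYdiffAt).intervalIntegrable
      rw [← intervalIntegral.integral_sub hint1 hint2]
      have hptw : ∀ t ∈ Set.uIoc (0:ℝ) 1, ‖z • vf n f ((t:ℂ)*z)
          (∑ k ∈ Finset.range m, u k ((t:ℂ)*z)) - z • vf n f ((t:ℂ)*z)
          (Y ((t:ℂ)*z))‖ ≤ M * (ε/(M+1)) := by
        intro t ht
        have htm := hmemt t (uIoc_subset_uIcc ht)
        rw [← smul_sub, ← vf_sub, norm_smul]
        have h1 := hM _ htm (∑ k ∈ Finset.range m, u k ((t:ℂ)*z) - Y ((t:ℂ)*z))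
        have h2 : dist (Y ((t:ℂ)*z)) (∑ k ∈ Finset.range m, u k ((t:ℂ)*z))
            < ε/(M+1) := hN m hm _ htm
        rw [dist_comm, dist_eq_norm] at h2
        calc ‖z‖ * ‖vf n f ((t:ℂ)*z)
              (∑ k ∈ Finset.range m, u k ((t:ℂ)*z) - Y ((t:ℂ)*z))‖
            ≤ 1 * (M * (ε/(M+1))) := by
              apply mul_le_mul hz1.le (h1.trans ?_) (norm_nonneg _) one_pos.le
              exact mul_le_mul_of_nonneg_left h2.le hM0
          _ = M * (ε/(M+1)) := one_mul _
      have hle := intervalIntegral.norm_integral_le_of_norm_le_const hptw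
      have hlt : M * (ε / (M + 1)) * |1 - (0:ℝ)| < ε := by
        rw [sub_zero, abs_one, mul_one, ← mul_div_assoc,
          div_lt_iff₀ (by linarith : (0:ℝ) < M+1)]
        nlinarith
      exact hle.trans_lt hlt
    have heq : (fun m => ∑ k ∈ Finset.range (m+1), u k z)
        = fun m => c + ∫ t in (0:ℝ)..1, z • vf n f ((t:ℂ)*z)
            (∑ k ∈ Finset.range m, u k ((t:ℂ)*z)) := funext hstep
    rw [heq] at hLHS
    exact tendsto_nhds_unique hLHS hRHS
  refine ⟨Y, ?_, ?_⟩
  · have h0 := hfix 0 (mem_ball_self one_pos)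
    simpa using h0
  · intro z hz
    have hg : ∀ ζ ∈ ball (0:ℂ) 1, DifferentiableAt ℂ (fun ζ => vf n f ζ (Y ζ)) ζ :=
      vf_diff n f hf hYdiffAt
    have hG := seg_hasDerivAt (g := fun ζ => vf n f ζ (Y ζ)) hg hz
    have heq : Y =ᶠ[nhds z]
        (fun w => c + ∫ t in (0:ℝ)..1, w • vf n f ((t:ℂ)*w) (Y ((t:ℂ)*w))) :=
      Filter.eventuallyEq_of_mem (isOpen_ball.mem_nhds hz) hfix
    simpa using (((hasDerivAt_const z c).add hG).congr_of_eventuallyEq heq)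

end CauchyODE

/-- **Cauchy's theorem**: a linear ODE of order `n` with coefficients analytic on the
open unit disc has an analytic solution on all of the disc with prescribed values of
the derivatives of order `0, …, n-1` at `0`. -/
theorem stmt_0 (n : ℕ) (f : Fin n → ℂ → ℂ)
    (hf : ∀ i : Fin n, ∀ z ∈ ball (0 : ℂ) 1, DifferentiableAt ℂ (f i) z)
    (c : Fin n → ℂ) :
    ∃ y : ℂ → ℂ,
      (∀ z ∈ ball (0 : ℂ) 1, DifferentiableAt ℂ y z) ∧
      (∀ z ∈ ball (0 : ℂ) 1,
        iteratedDeriv n y z + ∑ i : Fin n, f i z * iteratedDeriv (i : ℕ) y z = 0) ∧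
      (∀ j : Fin n, iteratedDeriv (j : ℕ) y 0 = c j) := by
  obtain _ | m := n
  · refine ⟨0, fun z _ => differentiableAt_const 0, ?_, fun j => j.elim0⟩
    intro z _
    simp
  · obtain ⟨Y, hY0, hYd⟩ := CauchyODE.exists_system_solution (m+1) f hf c
    set y : ℂ → ℂ := fun z => Y z ⟨0, Nat.succ_pos m⟩ with hy
    have hcomp : ∀ (j : Fin (m+1)), ∀ z ∈ ball (0:ℂ) 1,
        HasDerivAt (fun w => Y w j) (CauchyODE.vf (m+1) f z (Y z) j) z := by
      intro j z hz
      exact hasDerivAt_pi.mp (hYd z hz) j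
    have hiter : ∀ (k : ℕ) (hk : k < m+1),
        Set.EqOn (iteratedDeriv k y) (fun z => Y z ⟨k, hk⟩) (ball (0:ℂ) 1) := by
      intro k
      induction k with
      | zero => intro hk z hz; simp [iteratedDeriv_zero, hy]
      | succ k ih =>
        intro hk z hz
        have hk' : k < m+1 := Nat.lt_of_succ_lt hk
        rw [iteratedDeriv_succ]
        have hev : iteratedDeriv k y =ᶠ[nhds z] (fun w => Y w ⟨k, hk'⟩) :=
          Filter.eventuallyEq_of_mem (isOpen_ball.mem_nhds hz) (ih hk')
        rw [hev.deriv_eq, (hcomp ⟨k, hk'⟩ z hz).deriv]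
        simp only [CauchyODE.vf]
        rw [dif_pos hk]
    have hsum : ∀ z ∈ ball (0:ℂ) 1, ∀ i : Fin (m+1),
        iteratedDeriv (i:ℕ) y z = Y z i := by
      intro z hz i
      rw [hiter (i:ℕ) i.isLt hz]
    refine ⟨y, ?_, ?_, ?_⟩
    · exact fun z hz => (hcomp ⟨0, Nat.succ_pos m⟩ z hz).differentiableAt
    · intro z hz
      have htop : iteratedDeriv (m+1) y z = -∑ j, f j z * Y z j := by
        rw [iteratedDeriv_succ]
        have hev : iteratedDeriv m y =ᶠ[nhds z] (fun w => Y w ⟨m, lt_add_one m⟩) :=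
          Filter.eventuallyEq_of_mem (isOpen_ball.mem_nhds hz) (hiter m (lt_add_one m))
        rw [hev.deriv_eq, (hcomp ⟨m, lt_add_one m⟩ z hz).deriv]
        simp only [CauchyODE.vf]
        rw [dif_neg (lt_irrefl (m+1))]
      have hsum' : ∑ i : Fin (m+1), f i z * iteratedDeriv (i:ℕ) y z
          = ∑ i : Fin (m+1), f i z * Y z i :=
        Finset.sum_congr rfl fun i _ => by rw [hsum z hz i]
      rw [htop, hsum']
      exact neg_add_cancel _
    · intro j
      have := hsum 0 (mem_ball_self one_pos) j
      rw [this, hY0]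
end

section
/- Let ℍ = {τ ∈ ℂ : Im τ > 0} be the upper half plane and let q : ℍ → ℂ be the covering map q(τ) = exp(2πiτ) of the punctured unit disc Δ* = {z ∈ ℂ : 0 < |z| < 1}. Let f : ℍ → ℂ be holomorphic. Then the following are equivalent: (i) the set of functions {τ ↦ f(τ + m) : m ∈ ℤ} is finite; (ii) f is algebraic over the meromorphic functions on Δ*, i.e., there exist an integer n ≥ 1 and functions φ_0, …, φ_{n-1} meromorphic on Δ* such that f(τ)^n + Σ_{j=0}^{n-1} φ_j(q(τ)) f(τ)^j = 0 for every τ ∈ ℍ at which each φ_j is analytic at the point q(τ). -/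
open Complex Polynomial Finset in
noncomputable def myPP (f : ℂ → ℂ) (N : ℕ) (τ : ℂ) : Polynomial ℂ :=
  ∏ k ∈ Finset.range N, (X - C (f (τ + k)))

open Complex Polynomial Finset

lemma myPP_monic (f : ℂ → ℂ) (N : ℕ) (τ : ℂ) : (myPP f N τ).Monic :=
  monic_prod_of_monic _ _ fun _ _ => monic_X_sub_C _

lemma myPP_natDegree (f : ℂ → ℂ) (N : ℕ) (τ : ℂ) : (myPP f N τ).natDegree = N := by
  rw [myPP, natDegree_prod _ _ fun i _ => X_sub_C_ne_zero _]
  simp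

lemma myPP_coeff (f : ℂ → ℂ) (N : ℕ) (τ : ℂ) {j : ℕ} (hj : j ≤ N) :
    (myPP f N τ).coeff j = (-1) ^ (N - j) *
      ∑ t ∈ (Finset.range N).powersetCard (N - j), ∏ i ∈ t, f (τ + i) := by
  have h : myPP f N τ =
      (((Finset.range N).val.map (fun k : ℕ => f (τ + k))).map fun t => X - C t).prod := by
    rw [myPP, Finset.prod, Multiset.map_map]
    rfl
  rw [h, Multiset.prod_X_sub_C_coeff _ (by simpa using hj)]
  simp only [Multiset.card_map, Multiset.card_range, Finset.card_range]
  rw [Finset.esymm_map_val]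
  simp

lemma myPP_add_one {f : ℂ → ℂ} {N : ℕ} (hper : ∀ σ : ℂ, 0 < σ.im → f (σ + N) = f σ)
    {τ : ℂ} (hτ : 0 < τ.im) : myPP f N (τ + 1) = myPP f N τ := by
  have key : ∀ k : ℕ, (X : ℂ[X]) - C (f (τ + 1 + k)) = X - C (f (τ + (k + 1 : ℕ))) := by
    intro k; push_cast; ring_nf
  set g : ℕ → ℂ[X] := fun k => X - C (f (τ + k)) with hg
  have h1 : (myPP f N (τ + 1)) * g 0 = (myPP f N τ) * g 0 := by
    simp only [myPP]
    calc (∏ k ∈ Finset.range N, (X - C (f (τ + 1 + k)))) * g 0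
        = (∏ k ∈ Finset.range N, g (k + 1)) * g 0 :=
          by rw [Finset.prod_congr rfl fun k _ => key k]
      _ = ∏ k ∈ Finset.range (N + 1), g k := (Finset.prod_range_succ' g N).symm
      _ = (∏ k ∈ Finset.range N, g k) * g N := Finset.prod_range_succ g N
      _ = (∏ k ∈ Finset.range N, g k) * g 0 := by
          have : f (τ + N) = f (τ + 0) := by simpa using hper τ hτ
          simp only [hg, this, Nat.cast_zero]
  exact mul_right_cancel₀ (X_sub_C_ne_zero _) h1

lemma myPP_int {f : ℂ → ℂ} {N : ℕ} (hper : ∀ σ : ℂ, 0 < σ.im → f (σ + N) = f σ)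
    {τ : ℂ} (hτ : 0 < τ.im) (m : ℤ) : myPP f N (τ + m) = myPP f N τ := by
  induction m using Int.induction_on with
  | zero => simp
  | succ k ih =>
      have h1 : τ + ((k : ℤ) + 1 : ℤ) = (τ + (k : ℤ)) + 1 := by push_cast; ring
      rw [h1, myPP_add_one hper (by simpa using hτ), ih]
  | pred k ih =>
      have h1 : τ + (-(k : ℤ) : ℤ) = (τ + (-(k : ℤ) - 1 : ℤ)) + 1 := by push_cast; ring
      rw [← ih, h1, myPP_add_one hper (by simpa using hτ)]

lemma myPP_eval {f : ℂ → ℂ} {N : ℕ} {τ x : ℂ} :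
    (myPP f N τ).eval x = x ^ N + ∑ j : Fin N, (myPP f N τ).coeff j * x ^ (j : ℕ) := by
  conv_lhs => rw [eval_eq_sum_range]
  rw [myPP_natDegree, Finset.sum_range_succ, Fin.sum_univ_eq_sum_range
    (fun j => (myPP f N τ).coeff j * x ^ j)]
  have : (myPP f N τ).coeff N = 1 := by
    have := (myPP_monic f N τ).leadingCoeff
    rwa [leadingCoeff, myPP_natDegree] at this
  rw [this, one_mul, add_comm]

lemma myPP_root {f : ℂ → ℂ} {N : ℕ} (hN : 1 ≤ N) {τ : ℂ} : (myPP f N τ).eval (f τ) = 0 := by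
  rw [myPP, eval_prod]
  refine Finset.prod_eq_zero (Finset.mem_range.2 hN) ?_
  simp

lemma im_pos_of_exp_eq {x τ : ℂ} (hx1 : ‖x‖ < 1)
    (h : Complex.exp (2 * Real.pi * I * τ) = x) : 0 < τ.im := by
  have hre : (2 * (Real.pi : ℂ) * I * τ).re = -(2 * Real.pi * τ.im) := by
    simp [Complex.mul_re, Complex.mul_im]
  have habs : ‖x‖ = Real.exp (-(2 * Real.pi * τ.im)) := by
    rw [← h, Complex.norm_exp, hre]
  rw [habs] at hx1
  have h2 : -(2 * Real.pi * τ.im) < 0 := by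
    by_contra hcon
    push_neg at hcon
    exact absurd hx1 (not_lt.2 (by simpa using Real.one_le_exp hcon))
  nlinarith [Real.pi_pos]

lemma exp_two_pi_I_log {x : ℂ} (hx : x ≠ 0) :
    Complex.exp (2 * Real.pi * I * (Complex.log x / (2 * Real.pi * I))) = x := by
  rw [mul_div_cancel₀ _ Complex.two_pi_I_ne_zero, Complex.exp_log hx]

lemma exists_int_of_exp_eq {τ₁ τ₂ : ℂ}
    (h : Complex.exp (2 * Real.pi * I * τ₁) = Complex.exp (2 * Real.pi * I * τ₂)) :
    ∃ m : ℤ, τ₁ = τ₂ + m := by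
  obtain ⟨n, hn⟩ := Complex.exp_eq_exp_iff_exists_int.1 h
  refine ⟨n, mul_left_cancel₀ Complex.two_pi_I_ne_zero ?_⟩
  rw [hn]; ring

lemma myPP_coeff_analytic {f : ℂ → ℂ} {N j : ℕ} (hj : j ≤ N)
    (hfa : ∀ z : ℂ, 0 < z.im → AnalyticAt ℂ f z) {ℓ : ℂ → ℂ} {x : ℂ}
    (hℓ : AnalyticAt ℂ ℓ x) (him : 0 < (ℓ x).im) :
    AnalyticAt ℂ (fun w => (myPP f N (ℓ w)).coeff j) x := by
  have heq : (fun w => (myPP f N (ℓ w)).coeff j) = fun w => (-1 : ℂ) ^ (N - j) *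
      ∑ t ∈ (Finset.range N).powersetCard (N - j), ∏ i ∈ t, f (ℓ w + i) :=
    funext fun w => myPP_coeff f N (ℓ w) hj
  rw [heq]
  refine analyticAt_const.mul ?_
  refine Finset.analyticAt_fun_sum _ fun t _ => ?_
  refine Finset.analyticAt_fun_prod _ fun i _ => ?_
  have h1 : AnalyticAt ℂ (fun w => ℓ w + (i : ℂ)) x := hℓ.add analyticAt_const
  exact AnalyticAt.comp (g := f) (f := fun w => ℓ w + (i : ℂ))
    (hfa (ℓ x + i) (by simpa using him)) h1

lemma phi_analytic {f : ℂ → ℂ} {N j : ℕ} (hj : j ≤ N)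
    (hfa : ∀ z : ℂ, 0 < z.im → AnalyticAt ℂ f z)
    (hper : ∀ σ : ℂ, 0 < σ.im → f (σ + N) = f σ)
    {x : ℂ} (hx0 : x ≠ 0) (hx1 : ‖x‖ < 1) :
    AnalyticAt ℂ (fun w => (myPP f N (Complex.log w / (2 * Real.pi * I))).coeff j) x := by
  by_cases hx : x ∈ Complex.slitPlane
  · have hℓ : AnalyticAt ℂ (fun w => Complex.log w / (2 * Real.pi * I)) x :=
      (analyticAt_clog hx).div analyticAt_const Complex.two_pi_I_ne_zero
    exact myPP_coeff_analytic hj hfa hℓ (im_pos_of_exp_eq hx1 (exp_two_pi_I_log hx0))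
  · -- x is a negative real; use the branch `log (-w) / (2πI) + 1/2`
    set ℓ' : ℂ → ℂ := fun w => Complex.log (-w) / (2 * Real.pi * I) + 1 / 2 with hℓ'def
    have hnx : -x ∈ Complex.slitPlane := by
      simp only [Complex.mem_slitPlane_iff, not_or, not_lt, ne_eq, not_not] at hx ⊢
      rcases hx with ⟨h1, h2⟩
      have : x.re ≠ 0 := fun h => hx0 (Complex.ext h h2)
      left
      simp only [Complex.neg_re]
      cases lt_or_eq_of_le h1 with
      | inl h => linarith
      | inr h => exact absurd h this
    have hexp : ∀ w : ℂ, w ≠ 0 → Complex.exp (2 * Real.pi * I * ℓ' w) = w := by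
      intro w hw
      have harg : 2 * (Real.pi : ℂ) * I * ℓ' w = Complex.log (-w) + Real.pi * I := by
        have h1 : 2 * (Real.pi : ℂ) * I * ℓ' w =
            2 * Real.pi * I * (Complex.log (-w) / (2 * Real.pi * I)) + Real.pi * I := by
          rw [hℓ'def]; ring
        rw [h1, mul_div_cancel₀ _ Complex.two_pi_I_ne_zero]
      rw [harg, Complex.exp_add, Complex.exp_log (neg_ne_zero.2 hw), Complex.exp_pi_mul_I]
      ring
    have hℓa : AnalyticAt ℂ ℓ' x := by
      refine AnalyticAt.add ?_ analyticAt_const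
      refine AnalyticAt.div ?_ analyticAt_const Complex.two_pi_I_ne_zero
      exact AnalyticAt.comp (g := Complex.log) (f := fun w => -w)
        (analyticAt_clog hnx) analyticAt_id.neg
    have him' : 0 < (ℓ' x).im := im_pos_of_exp_eq hx1 (hexp x hx0)
    have hΨ : AnalyticAt ℂ (fun w => (myPP f N (ℓ' w)).coeff j) x :=
      myPP_coeff_analytic hj hfa hℓa him'
    refine hΨ.congr ?_
    have hU : {w : ℂ | w ≠ 0 ∧ ‖w‖ < 1} ∈ nhds x := by
      refine IsOpen.mem_nhds ?_ ⟨hx0, hx1⟩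
      have h1 : IsOpen {w : ℂ | w ≠ 0} := isOpen_ne
      have h2 : IsOpen {w : ℂ | ‖w‖ < 1} :=
        isOpen_lt continuous_norm continuous_const
      exact h1.inter h2
    refine Filter.eventuallyEq_of_mem hU ?_
    rintro w ⟨hw0, hw1⟩
    have he1 : Complex.exp (2 * Real.pi * I * (Complex.log w / (2 * Real.pi * I))) = w :=
      exp_two_pi_I_log hw0
    obtain ⟨m, hm⟩ := exists_int_of_exp_eq ((he1.trans (hexp w hw0).symm))
    have himw : 0 < (ℓ' w).im := im_pos_of_exp_eq hw1 (hexp w hw0)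
    simp only
    rw [hm, myPP_int hper himw m]

lemma countable_of_isolated' {s : Set ℂ} (h : ∀ x ∈ s, nhdsWithin x {x}ᶜ ⊓ Filter.principal s = ⊥) :
    s.Countable := by
  have hd : DiscreteTopology s := discreteTopology_subtype_iff.mpr h
  have : Countable s := countable_of_Lindelof_of_discrete
  exact Set.countable_coe_iff.mpr this

lemma fiber_countable (w : ℂ) :
    {τ : ℂ | Complex.exp (2 * Real.pi * I * τ) = w}.Countable := by
  rcases Set.eq_empty_or_nonempty {τ : ℂ | Complex.exp (2 * Real.pi * I * τ) = w} with h | ⟨τ₀, hτ₀⟩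
  · rw [h]; exact Set.countable_empty
  · refine (Set.countable_range fun m : ℤ => τ₀ + (m : ℂ)).mono ?_
    intro τ hτ
    obtain ⟨m, hm⟩ := exists_int_of_exp_eq (hτ.trans hτ₀.symm)
    exact ⟨m, hm.symm⟩

lemma upper_half_uncountable : ¬ ({z : ℂ | 0 < z.im}).Countable := by
  intro hc
  have hinj : Function.Injective (fun t : ℝ => (t : ℂ) + I) := by
    intro a b hab
    simpa [Complex.ext_iff] using hab
  have hsub : Set.range (fun t : ℝ => (t : ℂ) + I) ⊆ {z : ℂ | 0 < z.im} := by
    rintro z ⟨t, rfl⟩; simp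
  have : Countable (Set.range (fun t : ℝ => (t : ℂ) + I)) := (hc.mono hsub).to_subtype
  have : Countable ℝ := Countable.of_equiv _ (Equiv.ofInjective _ hinj).symm
  exact absurd this (not_countable_iff.mpr inferInstance)

lemma q_abs_lt_one {τ : ℂ} (hτ : 0 < τ.im) : ‖(Complex.exp (2 * Real.pi * I * τ))‖ < 1 := by
  have hre : (2 * (Real.pi : ℂ) * I * τ).re = -(2 * Real.pi * τ.im) := by
    simp [Complex.mul_re, Complex.mul_im]
  rw [Complex.norm_exp, hre, Real.exp_lt_one_iff]
  nlinarith [Real.pi_pos]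

lemma q_periodic (τ : ℂ) (m : ℤ) :
    Complex.exp (2 * Real.pi * I * (τ + m)) = Complex.exp (2 * Real.pi * I * τ) := by
  rw [mul_add, Complex.exp_add]
  have : (2 * (Real.pi : ℂ) * I * m) = m * (2 * Real.pi * I) := by ring
  rw [this, Complex.exp_int_mul_two_pi_mul_I, mul_one]
/-- A holomorphic function on the upper half plane, viewed through the covering map
`q(τ) = exp(2πiτ)` of the punctured unit disc, has a finite orbit under the deck
transformations `τ ↦ τ + m` if and only if it is algebraic over the field of
meromorphic functions on the punctured disc. -/
theorem stmt_5 (f : ℂ → ℂ)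
    (hf : ∀ τ : ℂ, 0 < τ.im → DifferentiableAt ℂ f τ)
    (q : ℂ → ℂ) (hq : ∀ τ : ℂ, q τ = Complex.exp (2 * Real.pi * Complex.I * τ)) :
    (Set.Finite {g : {τ : ℂ // 0 < τ.im} → ℂ |
        ∃ m : ℤ, ∀ τ : {τ : ℂ // 0 < τ.im}, g τ = f (τ.val + m)}) ↔
    (∃ n : ℕ, 1 ≤ n ∧ ∃ φ : Fin n → ℂ → ℂ,
      (∀ j : Fin n, MeromorphicOn (φ j) {z : ℂ | z ≠ 0 ∧ ‖z‖ < 1}) ∧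
      ∀ τ : ℂ, 0 < τ.im → (∀ j : Fin n, AnalyticAt ℂ (φ j) (q τ)) →
        f τ ^ n + ∑ j : Fin n, φ j (q τ) * f τ ^ (j : ℕ) = 0) := by
  have hopen : IsOpen {w : ℂ | 0 < w.im} := isOpen_lt continuous_const Complex.continuous_im
  have hfa : ∀ z : ℂ, 0 < z.im → AnalyticAt ℂ f z := fun z hz =>
    DifferentiableOn.analyticAt (fun w hw => (hf w hw).differentiableWithinAt) (hopen.mem_nhds hz)
  constructor
  · -- finite orbit → algebraic
    intro hfin
    have hexm : ∃ m₁ m₂ : ℤ, m₁ ≠ m₂ ∧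
        (fun τ : {τ : ℂ // 0 < τ.im} => f (τ.val + m₁)) = (fun τ => f (τ.val + m₂)) := by
      by_contra hcon
      push_neg at hcon
      have hinj : Function.Injective
          (fun m : ℤ => fun τ : {τ : ℂ // 0 < τ.im} => f (τ.val + m)) := by
        intro a b hab
        by_contra hne
        exact hcon a b hne hab
      have hmem : ∀ m : ℤ, (fun τ : {τ : ℂ // 0 < τ.im} => f (τ.val + (m : ℂ))) ∈
          {g : {τ : ℂ // 0 < τ.im} → ℂ |
            ∃ m' : ℤ, ∀ τ : {τ : ℂ // 0 < τ.im}, g τ = f (τ.val + m')} :=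
        fun m => ⟨m, fun τ => rfl⟩
      exact (Set.infinite_of_injective_forall_mem hinj hmem) hfin
    obtain ⟨m₁, m₂, hne, hEq⟩ := hexm
    have hper' : ∀ σ : ℂ, 0 < σ.im → f (σ + ((m₁ - m₂ : ℤ) : ℂ)) = f σ := by
      intro σ hσ
      have h1 := congrFun hEq ⟨σ - m₂, by simpa using hσ⟩
      simp only at h1
      have h2 : σ - (m₂ : ℂ) + m₁ = σ + ((m₁ - m₂ : ℤ) : ℂ) := by push_cast; ring
      have h3 : σ - (m₂ : ℂ) + m₂ = σ := by ring
      rwa [h2, h3] at h1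
    set N : ℕ := (m₁ - m₂).natAbs with hNdef
    have hN : 1 ≤ N := Int.natAbs_pos.mpr (sub_ne_zero.2 hne)
    have hper : ∀ σ : ℂ, 0 < σ.im → f (σ + N) = f σ := by
      intro σ hσ
      rcases Int.natAbs_eq (m₁ - m₂) with h | h
      · have := hper' σ hσ
        rw [h] at this
        rwa [Int.cast_natCast] at this
      · have h2 := hper' (σ + N) (by simpa using hσ)
        rw [h] at h2
        have h3 : σ + (N : ℂ) + ((-(N : ℤ) : ℤ) : ℂ) = σ := by push_cast; ring
        rw [h3] at h2
        exact h2.symm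
    refine ⟨N, hN, fun j w => (myPP f N (Complex.log w / (2 * Real.pi * Complex.I))).coeff j,
      fun j x hx => (phi_analytic j.isLt.le hfa hper hx.1 hx.2).meromorphicAt, ?_⟩
    intro τ hτ _
    have hq0 : q τ ≠ 0 := by rw [hq]; exact Complex.exp_ne_zero _
    have h1 : Complex.exp (2 * Real.pi * Complex.I * (Complex.log (q τ) / (2 * Real.pi * Complex.I)))
        = Complex.exp (2 * Real.pi * Complex.I * τ) := (exp_two_pi_I_log hq0).trans (hq τ)
    obtain ⟨m, hm⟩ := exists_int_of_exp_eq h1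
    have hcoeff : ∀ j : Fin N,
        (myPP f N (Complex.log (q τ) / (2 * Real.pi * Complex.I))).coeff j
          = (myPP f N τ).coeff j := by
      intro j
      rw [hm, myPP_int hper hτ m]
    calc f τ ^ N + ∑ j : Fin N,
          (myPP f N (Complex.log (q τ) / (2 * Real.pi * Complex.I))).coeff j * f τ ^ (j : ℕ)
        = f τ ^ N + ∑ j : Fin N, (myPP f N τ).coeff j * f τ ^ (j : ℕ) := by
          congr 1
          exact Finset.sum_congr rfl fun j _ => by rw [hcoeff j]
      _ = (myPP f N τ).eval (f τ) := myPP_eval.symm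
      _ = 0 := myPP_root hN
  · -- algebraic → finite orbit
    rintro ⟨n, hn, φ, hmero, heq⟩
    by_contra hG
    have hGinf : Set.Infinite {g : {τ : ℂ // 0 < τ.im} → ℂ |
        ∃ m : ℤ, ∀ τ : {τ : ℂ // 0 < τ.im}, g τ = f (τ.val + m)} := hG
    obtain ⟨t, htG, htc⟩ := hGinf.exists_subset_card_eq (n + 1)
    classical
    set mg : ({τ : ℂ // 0 < τ.im} → ℂ) → ℤ := fun g =>
      if h : ∃ m : ℤ, ∀ τ : {τ : ℂ // 0 < τ.im}, g τ = f (τ.val + m) then h.choose else 0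
      with hmgdef
    have hmgspec : ∀ g ∈ t, ∀ τ : {τ : ℂ // 0 < τ.im}, g τ = f (τ.val + mg g) := by
      intro g hg τ
      have h := htG hg
      have hmg : mg g = h.choose := by
        simp only [hmgdef]
        exact dif_pos h
      rw [hmg]
      exact h.choose_spec τ
    -- the two countable "bad" sets
    set badA : Set ℂ := {τ : ℂ | 0 < τ.im ∧
      ∃ j : Fin n, ¬ AnalyticAt ℂ (φ j) (Complex.exp (2 * Real.pi * Complex.I * τ))} with hbadA
    set badZ : Set ℂ := ⋃ g ∈ (t : Set _), ⋃ g' ∈ (t : Set _),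
      {τ : ℂ | 0 < τ.im ∧ g ≠ g' ∧ f (τ + (mg g : ℂ)) = f (τ + (mg g' : ℂ))} with hbadZ
    have hbadAc : badA.Countable := by
      set D : Fin n → Set ℂ := fun j =>
        {w : ℂ | (w ≠ 0 ∧ ‖w‖ < 1) ∧ ¬ AnalyticAt ℂ (φ j) w} with hD
      have hDc : ∀ j, (D j).Countable := by
        intro j
        refine countable_of_isolated' fun w hw => ?_
        rw [Filter.inf_principal_eq_bot]
        refine Filter.mem_of_superset (hmero j w hw.1).eventually_analyticAt ?_
        intro y hy hyD
        exact hyD.2 hy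
      have hsub : badA ⊆ ⋃ j : Fin n, ⋃ w ∈ D j,
          {τ : ℂ | Complex.exp (2 * Real.pi * Complex.I * τ) = w} := by
        rintro τ ⟨hτ, j, hj⟩
        refine Set.mem_iUnion.2 ⟨j, Set.mem_iUnion₂.2
          ⟨Complex.exp (2 * Real.pi * Complex.I * τ), ⟨⟨Complex.exp_ne_zero _, q_abs_lt_one hτ⟩, hj⟩, rfl⟩⟩
      exact ((Set.countable_iUnion fun j =>
        (hDc j).biUnion fun w _ => fiber_countable w).mono hsub)
    have hbadZc : badZ.Countable := by
      refine t.countable_toSet.biUnion fun g hg => t.countable_toSet.biUnion fun g' hg' => ?_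
      by_cases hgg' : g = g'
      · refine Set.Countable.mono ?_ Set.countable_empty
        intro τ hτ
        exact absurd hgg' hτ.2.1
      · refine countable_of_isolated' fun x hx => ?_
        rw [Filter.inf_principal_eq_bot]
        by_contra hcon
        have hfreq : ∃ᶠ w in nhdsWithin x {x}ᶜ,
            f (w + (mg g : ℂ)) = f (w + (mg g' : ℂ)) := by
          have h1 : ¬ ∀ᶠ w in nhdsWithin x {x}ᶜ, w ∉ {τ : ℂ | 0 < τ.im ∧ g ≠ g' ∧
              f (τ + (mg g : ℂ)) = f (τ + (mg g' : ℂ))} := hcon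
          rw [Filter.not_eventually] at h1
          exact h1.mono fun w hw => (not_not.mp hw).2.2
        have hFa : AnalyticOnNhd ℂ (fun z => f (z + (mg g : ℂ))) {z : ℂ | 0 < z.im} :=
          fun z hz => AnalyticAt.comp (g := f) (f := fun z => z + (mg g : ℂ))
            (hfa _ (by simpa using hz)) (analyticAt_id.add analyticAt_const)
        have hF'a : AnalyticOnNhd ℂ (fun z => f (z + (mg g' : ℂ))) {z : ℂ | 0 < z.im} :=
          fun z hz => AnalyticAt.comp (g := f) (f := fun z => z + (mg g' : ℂ))
            (hfa _ (by simpa using hz)) (analyticAt_id.add analyticAt_const)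
        have hEqOn := hFa.eqOn_of_preconnected_of_frequently_eq hF'a
          (convex_halfSpace_im_gt 0).isPreconnected hx.1 hfreq
        refine hgg' (funext fun τ => ?_)
        rw [hmgspec g hg τ, hmgspec g' hg' τ]
        exact hEqOn τ.2
    -- pick a good point
    have hgood : ¬ ({z : ℂ | 0 < z.im} ⊆ badA ∪ badZ) := by
      intro hsub
      exact upper_half_uncountable ((hbadAc.union hbadZc).mono hsub)
    obtain ⟨τ₀, hτ₀H, hτ₀bad⟩ := Set.not_subset.1 hgood
    have hτ₀im : 0 < τ₀.im := hτ₀H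
    have hτ₀A : τ₀ ∉ badA := fun h => hτ₀bad (Or.inl h)
    have hτ₀Z : τ₀ ∉ badZ := fun h => hτ₀bad (Or.inr h)
    -- the polynomial
    set c : Fin n → ℂ := fun j => φ j (Complex.exp (2 * Real.pi * Complex.I * τ₀)) with hc
    set p : Polynomial ℂ := Polynomial.X ^ n +
      ∑ j : Fin n, Polynomial.C (c j) * Polynomial.X ^ (j : ℕ) with hp
    have hs_deg : (∑ j : Fin n, Polynomial.C (c j) * Polynomial.X ^ (j : ℕ)).degree < (n : WithBot ℕ) := by
      refine lt_of_le_of_lt (Polynomial.degree_sum_le _ _) ?_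
      rw [Finset.sup_lt_iff (by exact_mod_cast WithBot.bot_lt_coe n)]
      intro j _
      refine lt_of_le_of_lt (Polynomial.degree_C_mul_X_pow_le _ _) ?_
      exact_mod_cast j.isLt
    have hmonic : p.Monic := Polynomial.monic_X_pow_add hs_deg
    have hpne : p ≠ 0 := hmonic.ne_zero
    have hdeg : p.natDegree ≤ n := by
      rw [Polynomial.natDegree_le_iff_degree_le]
      refine le_trans (Polynomial.degree_add_le _ _) (max_le ?_ hs_deg.le)
      rw [Polynomial.degree_X_pow]
    have hana : ∀ j : Fin n, AnalyticAt ℂ (φ j) (Complex.exp (2 * Real.pi * Complex.I * τ₀)) := by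
      intro j
      by_contra hcon
      exact hτ₀A ⟨hτ₀im, j, hcon⟩
    have hroot : ∀ g ∈ t, p.IsRoot (f (τ₀ + (mg g : ℂ))) := by
      intro g hg
      have h0 : 0 < (τ₀ + (mg g : ℂ)).im := by simpa using hτ₀im
      have hqeq : q (τ₀ + (mg g : ℂ)) = Complex.exp (2 * Real.pi * Complex.I * τ₀) := by
        rw [hq]; exact q_periodic τ₀ (mg g)
      have hval := heq (τ₀ + (mg g : ℂ)) h0 (by rw [hqeq]; exact hana)
      rw [hqeq] at hval
      rw [Polynomial.IsRoot, hp]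
      simp only [Polynomial.eval_add, Polynomial.eval_pow, Polynomial.eval_X,
        Polynomial.eval_finset_sum, Polynomial.eval_mul, Polynomial.eval_C]
      exact hval
    have hinjOn : Set.InjOn (fun g => f (τ₀ + (mg g : ℂ))) (t : Set _) := by
      intro g hg g' hg' hv
      by_contra hne'
      exact hτ₀Z (Set.mem_biUnion hg (Set.mem_biUnion hg' ⟨hτ₀im, hne', hv⟩))
    have himg : (t.image fun g => f (τ₀ + (mg g : ℂ))).card = n + 1 := by
      rw [Finset.card_image_of_injOn hinjOn, htc]
    have hsub2 : (t.image fun g => f (τ₀ + (mg g : ℂ))) ⊆ p.roots.toFinset := by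
      intro y hy
      obtain ⟨g, hg, rfl⟩ := Finset.mem_image.1 hy
      rw [Multiset.mem_toFinset, Polynomial.mem_roots']
      exact ⟨hpne, hroot g hg⟩
    have hfinal : n + 1 ≤ n := by
      calc n + 1 = (t.image fun g => f (τ₀ + (mg g : ℂ))).card := himg.symm
        _ ≤ p.roots.toFinset.card := Finset.card_le_card hsub2
        _ ≤ Multiset.card p.roots := p.roots.toFinset_card_le
        _ ≤ p.natDegree := p.card_roots'
        _ ≤ n := hdeg
    omega
end

section
/- Let A : Δ → M_n(ℂ) be analytic on the open unit disc Δ and put A_0 = A(0). Suppose that no two eigenvalues λ, μ of A_0 satisfy λ − μ ∈ ℤ \ {0}. Then there exist a radius r with 0 < r ≤ 1 and an analytic function X : {|z| < r} → M_n(ℂ) with X(0) equal to the identity matrix, such that z X'(z) + X(z) A_0 = A(z) X(z) for all |z| < r. (Consequently Y(z) = X(z) z^{A_0} solves the equation z Y'(z) = A(z) Y(z).) -/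
open Metric

attribute [local instance] Matrix.linftyOpNormedRing Matrix.linftyOpNormedAlgebra

attribute [-instance] instTopologicalSpaceMatrix Matrix.instUniformSpace

open Polynomial in
lemma auxEvalCharpoly (n : ℕ) (M : Matrix (Fin n) (Fin n) ℂ) (t : ℂ) :
    M.charpoly.eval t = (t • (1:Matrix (Fin n) (Fin n) ℂ) - M).det := by
  rw [Matrix.charpoly, ← Polynomial.coe_evalRingHom, RingHom.map_det]
  congr 1
  ext i j
  by_cases h : i = j <;>
  simp [Matrix.charmatrix_apply_eq, Matrix.charmatrix_apply_ne, h, Matrix.one_apply,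
    Matrix.smul_apply]

lemma auxListProdUnit {M : Type*} [Monoid M] (l : List M) (h : ∀ x ∈ l, IsUnit x) :
    IsUnit l.prod := by
  induction l with
  | nil => simp
  | cons a t ih =>
    simp only [List.prod_cons]
    exact ((h a (by simp)).mul (ih fun x hx => h x (List.mem_cons_of_mem _ hx)))

open Polynomial in
lemma auxSylvester (n : ℕ) (A₀ X : Matrix (Fin n) (Fin n) ℂ) (k : ℂ)
    (hk : ∀ lam, (Matrix.charpoly A₀).IsRoot lam → ¬ (Matrix.charpoly A₀).IsRoot (lam - k))
    (hX : A₀ * X = X * (A₀ + k • (1:Matrix (Fin n) (Fin n) ℂ))) : X = 0 := by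
  set B := A₀ + k • (1:Matrix (Fin n) (Fin n) ℂ) with hB
  have hpow : ∀ m : ℕ, A₀ ^ m * X = X * B ^ m := by
    intro m
    induction m with
    | zero => simp
    | succ m ih => rw [pow_succ, pow_succ, mul_assoc, hX, ← mul_assoc, ih, mul_assoc]
  have haev : ∀ p : Polynomial ℂ, (aeval A₀ p) * X = X * (aeval B p) := by
    intro p
    rw [aeval_eq_sum_range, aeval_eq_sum_range, Finset.sum_mul, Finset.mul_sum]
    refine Finset.sum_congr rfl fun i _ => ?_
    rw [smul_mul_assoc, mul_smul_comm, hpow]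
  have h0 : X * (aeval B (Matrix.charpoly A₀)) = 0 := by
    rw [← haev, Matrix.aeval_self_charpoly, zero_mul]
  have hsplit : (Matrix.charpoly A₀).Splits := IsAlgClosed.splits _
  have hmono := Matrix.charpoly_monic A₀
  have hfact := hsplit.eq_prod_roots_of_monic hmono
  have hunit : IsUnit (aeval B (Matrix.charpoly A₀)) := by
    rw [hfact, ← Multiset.prod_toList, map_list_prod (aeval B : Polynomial ℂ →ₐ[ℂ] _)]
    apply auxListProdUnit
    intro x hx
    simp only [List.mem_map, Multiset.mem_toList, Multiset.mem_map] at hx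
    obtain ⟨p, ⟨lam, hlam, rfl⟩, rfl⟩ := hx
    have hroot : (Matrix.charpoly A₀).IsRoot lam := (mem_roots hmono.ne_zero).1 hlam
    have hnr := hk lam hroot
    have : (aeval B) (Polynomial.X - C lam) = A₀ - (lam - k) • 1 := by
      simp only [map_sub, aeval_X, aeval_C, hB]
      rw [Algebra.algebraMap_eq_smul_one, sub_smul]
      abel
    rw [this, Matrix.isUnit_iff_isUnit_det, isUnit_iff_ne_zero]
    intro hdet
    apply hnr
    have : (Matrix.charpoly A₀).eval (lam - k) = 0 := by
      rw [auxEvalCharpoly]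
      have : (lam - k) • (1:Matrix (Fin n) (Fin n) ℂ) - A₀ = -(A₀ - (lam - k) • 1) := by abel
      rw [this, Matrix.det_neg, hdet, mul_zero]
    exact this
  obtain ⟨u, hu⟩ := hunit
  have : X = X * (aeval B (Matrix.charpoly A₀)) * (u⁻¹ : _) := by
    rw [← hu, Units.mul_inv_cancel_right]
  rw [h0, zero_mul] at this
  exact this

noncomputable def fuchsCoeff {E : Type*} [Ring E] (a : ℕ → E) (inv : ℕ → E → E) : ℕ → E
  | 0 => 1
  | (k+1) => inv (k+1) (∑ j ∈ Finset.range (k+1), a (j+1) * fuchsCoeff a inv (k - j))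
  decreasing_by omega

lemma auxGeomSum (t D : ℝ) (ht : 0 ≤ t) (hD : 0 < D) (h2 : 2*t ≤ D) (m : ℕ) :
    ∑ j ∈ Finset.range (m+1), t^j * D^(m-j) ≤ 2 * D^m := by
  calc ∑ j ∈ Finset.range (m+1), t^j * D^(m-j)
      ≤ ∑ j ∈ Finset.range (m+1), (1/2)^j * D^m := by
        apply Finset.sum_le_sum
        intro j hj
        have hj' : j ≤ m := by
          simp only [Finset.mem_range] at hj; omega
        have h1 : t^j ≤ (D/2)^j := pow_le_pow_left₀ ht (by linarith) j
        have h2' : (D/2)^j * D^(m-j) = (1/2)^j * D^m := by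
          rw [div_pow, div_pow, div_mul_eq_mul_div, div_mul_eq_mul_div, one_pow, one_mul,
            ← pow_add]
          congr 2
          omega
        calc t^j * D^(m-j) ≤ (D/2)^j * D^(m-j) := by
              apply mul_le_mul_of_nonneg_right h1 (pow_nonneg hD.le _)
          _ = (1/2)^j * D^m := h2'
    _ = (∑ j ∈ Finset.range (m+1), (1/(2:ℝ))^j) * D^m := by rw [Finset.sum_mul]
    _ ≤ 2 * D^m := by
        apply mul_le_mul_of_nonneg_right (sum_geometric_two_le _) (pow_nonneg hD.le _)

set_option maxHeartbeats 2000000 in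
/-- (Fuchs) If no two eigenvalues of `A₀ = A(0)` differ by a nonzero integer, the equation
`z X'(z) + X(z) A₀ = A(z) X(z)` has an analytic solution `X` near `0` with `X(0) = 1`
(so that `Y(z) = X(z) z^{A₀}` solves `z Y' = A Y`). -/
theorem stmt_7 (n : ℕ) (A : ℂ → Matrix (Fin n) (Fin n) ℂ)
    (hA : ∀ i j : Fin n, ∀ z ∈ ball (0 : ℂ) 1, DifferentiableAt ℂ (fun w => A w i j) z)
    (hEig : ∀ lam mu : ℂ,
      (Matrix.charpoly (A 0)).IsRoot lam → (Matrix.charpoly (A 0)).IsRoot mu →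
      ∀ m : ℤ, m ≠ 0 → lam - mu ≠ (m : ℂ)) :
    ∃ r : ℝ, 0 < r ∧ r ≤ 1 ∧
      ∃ X : ℂ → Matrix (Fin n) (Fin n) ℂ,
        (∀ i j : Fin n, ∀ z ∈ ball (0 : ℂ) r, DifferentiableAt ℂ (fun w => X w i j) z) ∧
        X 0 = 1 ∧
        (∀ z ∈ ball (0 : ℂ) r,
          z • (Matrix.of fun i j => deriv (fun w => X w i j) z) + X z * A 0
            = A z * X z) := by
  classical
  -- analyticity of A at 0
  have hdiffA : ∀ z ∈ ball (0:ℂ) 1, DifferentiableAt ℂ A z := by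
    intro z hz
    have hrw : A = fun w => ∑ i : Fin n, ∑ j : Fin n,
        (A w i j) • Matrix.single i j (1:ℂ) := by
      funext w
      nth_rewrite 1 [Matrix.matrix_eq_sum_single (A w)]
      refine Finset.sum_congr rfl fun i _ => Finset.sum_congr rfl fun j _ => ?_
      rw [Matrix.smul_single, smul_eq_mul, mul_one]
    rw [hrw]
    apply DifferentiableAt.fun_sum; intro i _
    apply DifferentiableAt.fun_sum; intro j _
    exact (hA i j z hz).smul_const _
  have hAdOn : DifferentiableOn ℂ A (ball (0:ℂ) 1) :=
    fun z hz => (hdiffA z hz).differentiableWithinAt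
  have hAnal : AnalyticAt ℂ A 0 := hAdOn.analyticAt (isOpen_ball.mem_nhds (by simp))
  obtain ⟨p, hp⟩ := hAnal
  obtain ⟨r₀, hq⟩ := hp
  -- a positive real radius below the radius of convergence
  obtain ⟨ρ, hρ0, hρr⟩ := ENNReal.lt_iff_exists_nnreal_btwn.1 hq.r_pos
  have hρpos : (0:ℝ) < (ρ:ℝ) := by exact_mod_cast ENNReal.coe_pos.1 hρ0
  obtain ⟨M, hM0, hMa⟩ := p.norm_mul_pow_le_of_lt_radius (lt_of_lt_of_le hρr hq.r_le)
  have ha0 : p.coeff 0 = A 0 := hq.coeff_zero 1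
  set t : ℝ := (ρ:ℝ)⁻¹ with htdef
  have ht : 0 < t := inv_pos.2 hρpos
  have hat : ∀ j : ℕ, ‖p.coeff j‖ ≤ M * t^j := by
    intro j
    have h1 : ‖p.coeff j‖ ≤ ‖p j‖ := by
      calc ‖p.coeff j‖ = ‖p j (fun _ => 1)‖ := rfl
        _ ≤ ‖p j‖ * ∏ _i : Fin j, ‖(1:ℂ)‖ := (p j).le_opNorm _
        _ = ‖p j‖ := by simp
    have h2 : ‖p j‖ = (‖p j‖ * (ρ:ℝ)^j) * t^j := by
      rw [mul_assoc, htdef, ← mul_pow, mul_inv_cancel₀ hρpos.ne', one_pow, mul_one]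
    calc ‖p.coeff j‖ ≤ ‖p j‖ := h1
      _ = (‖p j‖ * (ρ:ℝ)^j) * t^j := h2
      _ ≤ M * t^j := by
          apply mul_le_mul_of_nonneg_right (hMa j) (pow_nonneg ht.le _)
  -- the linear operators
  set Lmap : ℕ → (Matrix (Fin n) (Fin n) ℂ →ₗ[ℂ] Matrix (Fin n) (Fin n) ℂ) :=
    fun k => (k:ℂ) • LinearMap.id + LinearMap.mulRight ℂ (A 0) - LinearMap.mulLeft ℂ (A 0)
    with hLdef
  have hLapp : ∀ (k : ℕ) (Y : Matrix (Fin n) (Fin n) ℂ),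
      Lmap k Y = (k:ℂ) • Y + Y * A 0 - A 0 * Y := by
    intro k Y
    rw [hLdef]
    simp only [LinearMap.sub_apply, LinearMap.add_apply, LinearMap.smul_apply,
      LinearMap.id_apply, LinearMap.mulRight_apply, LinearMap.mulLeft_apply]
  have hLinj : ∀ k : ℕ, 1 ≤ k → Function.Injective (Lmap k) := by
    intro k hk
    apply (injective_iff_map_eq_zero (Lmap k)).2
    intro Y hY
    rw [hLapp] at hY
    apply auxSylvester n (A 0) Y (k:ℂ)
    · intro lam hl hl2
      exact hEig lam (lam - (k:ℂ)) hl hl2 (k:ℤ)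
        (by exact_mod_cast Nat.one_le_iff_ne_zero.1 hk) (by push_cast; ring)
    · have h2 := sub_eq_zero.mp hY
      rw [mul_add, mul_smul_comm, mul_one, ← h2, add_comm]
  have hbij : ∀ k : ℕ, 1 ≤ k → Function.Bijective (Lmap k) := fun k hk =>
    ⟨hLinj k hk, LinearMap.injective_iff_surjective.1 (hLinj k hk)⟩
  set inv : ℕ → Matrix (Fin n) (Fin n) ℂ → Matrix (Fin n) (Fin n) ℂ :=
    fun k => if h : 1 ≤ k then
        fun y => (LinearEquiv.ofBijective (Lmap k) (hbij k h)).symm y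
      else fun y => y
    with hinvdef
  have hinv : ∀ k : ℕ, 1 ≤ k → ∀ y, Lmap k (inv k y) = y := by
    intro k hk y
    simp only [hinvdef, dif_pos hk]
    exact (LinearEquiv.ofBijective (Lmap k) (hbij k hk)).apply_symm_apply y
  -- a uniform bound on the inverses
  set K₀ : ℕ := ⌈2 * ‖A 0‖⌉₊ + 1 with hK₀def
  have hlarge : ∀ k : ℕ, K₀ ≤ k → ∀ y, ‖inv k y‖ ≤ ‖y‖ := by
    intro k hk y
    have hk1 : 1 ≤ k := le_trans (by omega) hk
    set x := inv k y with hxdef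
    have h1 : (k:ℂ) • x + x * A 0 - A 0 * x = y := by
      rw [← hLapp]; exact hinv k hk1 y
    have hxe : (k:ℂ) • x = y - x * A 0 + A 0 * x := by rw [← h1]; abel
    have h2 : (k:ℝ) * ‖x‖ ≤ ‖y‖ + 2 * ‖A 0‖ * ‖x‖ := by
      calc (k:ℝ) * ‖x‖ = ‖(k:ℂ) • x‖ := by
            rw [norm_smul, Complex.norm_natCast]
        _ = ‖y - x * A 0 + A 0 * x‖ := by rw [hxe]
        _ ≤ ‖y - x * A 0‖ + ‖A 0 * x‖ := norm_add_le _ _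
        _ ≤ ‖y‖ + ‖x * A 0‖ + ‖A 0 * x‖ := by
            have := norm_sub_le y (x * A 0); linarith
        _ ≤ ‖y‖ + ‖x‖ * ‖A 0‖ + ‖A 0‖ * ‖x‖ := by
            have := norm_mul_le x (A 0); have := norm_mul_le (A 0) x; linarith
        _ = ‖y‖ + 2 * ‖A 0‖ * ‖x‖ := by ring
    have hkb : 2 * ‖A 0‖ + 1 ≤ (k:ℝ) := by
      have h3 : 2 * ‖A 0‖ ≤ (⌈2 * ‖A 0‖⌉₊ : ℝ) := Nat.le_ceil _
      have h4 : (K₀:ℝ) ≤ (k:ℝ) := by exact_mod_cast hk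
      rw [hK₀def] at h4
      push_cast at h4
      linarith
    nlinarith [norm_nonneg x, norm_nonneg y]
  set Cfin : ℝ := ∑ k ∈ Finset.range K₀,
      (if h : 1 ≤ k then
        ‖LinearMap.toContinuousLinearMap
          ((LinearEquiv.ofBijective (Lmap k) (hbij k h)).symm :
            Matrix (Fin n) (Fin n) ℂ →ₗ[ℂ] Matrix (Fin n) (Fin n) ℂ)‖ else 0)
    with hCfindef
  set C : ℝ := max 1 Cfin with hCdef
  have hC1 : 1 ≤ C := le_max_left _ _
  have hC0 : 0 < C := lt_of_lt_of_le one_pos hC1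
  have hCinv : ∀ k : ℕ, 1 ≤ k → ∀ y, ‖inv k y‖ ≤ C * ‖y‖ := by
    intro k hk y
    rcases le_or_gt K₀ k with hK | hK
    · calc ‖inv k y‖ ≤ ‖y‖ := hlarge k hK y
        _ ≤ C * ‖y‖ := by nlinarith [norm_nonneg y]
    · have hterm : (if h : 1 ≤ k then
          ‖LinearMap.toContinuousLinearMap
            ((LinearEquiv.ofBijective (Lmap k) (hbij k h)).symm :
              Matrix (Fin n) (Fin n) ℂ →ₗ[ℂ] Matrix (Fin n) (Fin n) ℂ)‖ else 0) ≤ Cfin := by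
        rw [hCfindef]
        apply Finset.single_le_sum (f := fun k => (if h : 1 ≤ k then
          ‖LinearMap.toContinuousLinearMap
            ((LinearEquiv.ofBijective (Lmap k) (hbij k h)).symm :
              Matrix (Fin n) (Fin n) ℂ →ₗ[ℂ] Matrix (Fin n) (Fin n) ℂ)‖ else 0))
          (fun i _ => by by_cases h : 1 ≤ i <;> simp [h, norm_nonneg]) (Finset.mem_range.2 hK)
      rw [dif_pos hk] at hterm
      have happ : inv k y = LinearMap.toContinuousLinearMap
          ((LinearEquiv.ofBijective (Lmap k) (hbij k hk)).symm :
            Matrix (Fin n) (Fin n) ℂ →ₗ[ℂ] Matrix (Fin n) (Fin n) ℂ) y := by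
        simp only [hinvdef, dif_pos hk, LinearMap.coe_toContinuousLinearMap']
        rfl
      rw [happ]
      refine le_trans (ContinuousLinearMap.le_opNorm _ _) ?_
      have hfc : Cfin ≤ C := le_max_right _ _
      have := norm_nonneg y
      nlinarith
  -- the coefficients of the solution
  set c : ℕ → Matrix (Fin n) (Fin n) ℂ := fuchsCoeff p.coeff inv with hcdef
  have hc0 : c 0 = 1 := by rw [hcdef, fuchsCoeff]
  have hcsucc : ∀ k : ℕ, c (k+1) = inv (k+1)
      (∑ j ∈ Finset.range (k+1), p.coeff (j+1) * c (k - j)) := by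
    intro k; rw [hcdef, fuchsCoeff]
  set N : ℝ := max 1 ‖(1 : Matrix (Fin n) (Fin n) ℂ)‖ with hNdef
  have hN1 : (1:ℝ) ≤ N := le_max_left _ _
  have hN0 : (0:ℝ) ≤ N := zero_le_one.trans hN1
  set D : ℝ := max (2*t) (2*C*M*t) with hDdef
  have hDt : 2*t ≤ D := le_max_left _ _
  have hD0 : 0 < D := lt_of_lt_of_le (by linarith) hDt
  have hDc : 2*C*M*t ≤ D := le_max_right _ _
  have hc : ∀ k : ℕ, ‖c k‖ ≤ N * D^k := by
    intro k
    induction k using Nat.strong_induction_on with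
    | _ k ih =>
      match k with
      | 0 =>
        rw [hc0, pow_zero, mul_one]
        exact le_max_right _ _
      | (k+1) =>
        rw [hcsucc k]
        calc ‖inv (k+1) (∑ j ∈ Finset.range (k+1), p.coeff (j+1) * c (k - j))‖
            ≤ C * ‖∑ j ∈ Finset.range (k+1), p.coeff (j+1) * c (k - j)‖ :=
              hCinv (k+1) (by omega) _
          _ ≤ C * ∑ j ∈ Finset.range (k+1), (M * t^(j+1)) * (N * D^(k-j)) := by
              apply mul_le_mul_of_nonneg_left ?_ (le_of_lt hC0)
              refine le_trans (norm_sum_le _ _) (Finset.sum_le_sum fun j hj => ?_)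
              refine le_trans (norm_mul_le _ _) ?_
              have hj' : k - j < k + 1 := by omega
              exact mul_le_mul (hat (j+1)) (ih (k-j) hj') (norm_nonneg _)
                (by positivity)
          _ = (C * M * N * t) * ∑ j ∈ Finset.range (k+1), t^j * D^(k-j) := by
              rw [Finset.mul_sum, Finset.mul_sum]
              refine Finset.sum_congr rfl fun j _ => ?_
              ring
          _ ≤ (C * M * N * t) * (2 * D^k) := by
              apply mul_le_mul_of_nonneg_left (auxGeomSum t D ht.le hD0 hDt k) ?_
              exact mul_nonneg (mul_nonneg (mul_nonneg hC0.le hM0.le) hN0) ht.le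
          _ = (2*C*M*t) * (N * D^k) := by ring
          _ ≤ D * (N * D^k) := by
              apply mul_le_mul_of_nonneg_right hDc (mul_nonneg hN0 (pow_nonneg hD0.le k))
          _ = N * D^(k+1) := by ring
  -- the radius
  set r : ℝ := min 1 (min ((ρ:ℝ)/2) ((2*D)⁻¹)) with hrdef
  have hr0 : 0 < r := by
    apply lt_min one_pos
    apply lt_min
    · linarith
    · positivity
  have hr1 : r ≤ 1 := min_le_left _ _
  have hrρ : r ≤ (ρ:ℝ)/2 := le_trans (min_le_right _ _) (min_le_left _ _)
  have hrD : r ≤ (2*D)⁻¹ := le_trans (min_le_right _ _) (min_le_right _ _)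
  have hrD2 : r * D ≤ 1/2 := by
    have h1 : r * D ≤ (2*D)⁻¹ * D := mul_le_mul_of_nonneg_right hrD hD0.le
    have h2 : (2*D)⁻¹ * D = 1/2 := by field_simp
    linarith
  -- the solution
  set X : ℂ → Matrix (Fin n) (Fin n) ℂ := fun z => ∑' k : ℕ, z^k • c k with hXdef
  set S : ℂ → Matrix (Fin n) (Fin n) ℂ :=
    fun z => ∑' k : ℕ, ((k:ℂ) * z^(k-1)) • c k with hSdef
  -- summability facts
  have hzfacts : ∀ z : ℂ, ‖z‖ < r → ‖z‖ * D ≤ 1/2 ∧ t * ‖z‖ ≤ 1/2 ∧ ‖z‖ < (ρ:ℝ) := by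
    intro z hz
    refine ⟨?_, ?_, ?_⟩
    · nlinarith [norm_nonneg z]
    · have h1 : ‖z‖ ≤ (ρ:ℝ)/2 := le_of_lt (lt_of_lt_of_le hz hrρ)
      have h2 : t * ‖z‖ ≤ t * ((ρ:ℝ)/2) := mul_le_mul_of_nonneg_left h1 ht.le
      have h3 : t * ((ρ:ℝ)/2) = 1/2 := by
        rw [htdef]; field_simp
      linarith
    · have : (ρ:ℝ)/2 < (ρ:ℝ) := by linarith
      exact lt_of_lt_of_le hz (le_trans hrρ (le_of_lt this))
  have hsc : ∀ z : ℂ, ‖z‖ < r → Summable (fun k => ‖z^k • c k‖) := by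
    intro z hz
    apply Summable.of_nonneg_of_le (fun k => norm_nonneg _)
      (f := fun k => N * (1/2)^k)
    · intro k
      rw [norm_smul, norm_pow]
      calc ‖z‖^k * ‖c k‖ ≤ ‖z‖^k * (N * D^k) :=
            mul_le_mul_of_nonneg_left (hc k) (pow_nonneg (norm_nonneg z) k)
        _ = N * (‖z‖ * D)^k := by rw [mul_pow]; ring
        _ ≤ N * (1/2)^k := by
            apply mul_le_mul_of_nonneg_left ?_ hN0
            apply pow_le_pow_left₀ (mul_nonneg (norm_nonneg z) hD0.le) (hzfacts z hz).1
    · exact (summable_geometric_of_lt_one (by norm_num) (by norm_num)).mul_left N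
  have hsa : ∀ z : ℂ, ‖z‖ < r → Summable (fun j => ‖z^j • p.coeff j‖) := by
    intro z hz
    apply Summable.of_nonneg_of_le (fun k => norm_nonneg _)
      (f := fun j => M * (1/2)^j)
    · intro j
      rw [norm_smul, norm_pow]
      calc ‖z‖^j * ‖p.coeff j‖ ≤ ‖z‖^j * (M * t^j) :=
            mul_le_mul_of_nonneg_left (hat j) (pow_nonneg (norm_nonneg z) j)
        _ = M * (t * ‖z‖)^j := by rw [mul_pow]; ring
        _ ≤ M * (1/2)^j := by
            apply mul_le_mul_of_nonneg_left ?_ hM0.le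
            apply pow_le_pow_left₀ (mul_nonneg ht.le (norm_nonneg z)) (hzfacts z hz).2.1
    · exact (summable_geometric_of_lt_one (by norm_num) (by norm_num)).mul_left M
  have hAz : ∀ z : ℂ, ‖z‖ < r → HasSum (fun j => z^j • p.coeff j) (A z) := by
    intro z hz
    have hmem : z ∈ Metric.eball (0:ℂ) r₀ := by
      rw [Metric.mem_eball, edist_zero_right]
      refine lt_trans ?_ hρr
      rw [enorm_eq_nnnorm, ENNReal.coe_lt_coe, ← NNReal.coe_lt_coe, coe_nnnorm]
      exact (hzfacts z hz).2.2
    have h1 := hq.hasSum hmem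
    rw [zero_add] at h1
    simpa only [FormalMultilinearSeries.apply_eq_pow_smul_coeff] using h1
  -- derivative of X
  have hrD1 : |r * D| < 1 := by
    rw [abs_of_nonneg (mul_nonneg hr0.le hD0.le)]; linarith
  have hder : ∀ z ∈ ball (0:ℂ) r, HasDerivAt X (S z) z := by
    intro z hz
    have hu : Summable (fun k : ℕ => (N*D/(r*D)) * ((k:ℝ) * (r*D)^k)) := by
      apply Summable.mul_left
      have := summable_pow_mul_geometric_of_norm_lt_one (R := ℝ) 1 (r := r*D)
        (by rwa [Real.norm_eq_abs])
      simpa using this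
    refine hasDerivAt_tsum_of_isPreconnected hu isOpen_ball
      (convex_ball (0:ℂ) r).isPreconnected
      (g := fun (k : ℕ) (w : ℂ) => w^k • c k)
      (g' := fun (k : ℕ) (w : ℂ) => ((k:ℂ) * w^(k-1)) • c k)
      (fun k y _ => (hasDerivAt_pow k y).smul_const (c k)) ?_ (mem_ball_self hr0) ?_ hz
    · intro k y hy
      match k with
      | 0 => simp
      | (m+1) =>
        have hy' : ‖y‖ < r := mem_ball_zero_iff.1 hy
        have h1 : ‖y‖ ^ m ≤ r ^ m := pow_le_pow_left₀ (norm_nonneg y) hy'.le m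
        have h2 : ‖c (m+1)‖ ≤ N * D^(m+1) := hc (m+1)
        have hne : r * D ≠ 0 := (mul_pos hr0 hD0).ne'
        have hRHS : (N*D/(r*D)) * (((m+1:ℕ)):ℝ) * ((r*D)^(m+1))
            = (((m:ℝ)+1) * (N * D^(m+1))) * r^m := by
          field_simp
          push_cast
          ring
        have hLHS : ‖(((m+1:ℕ):ℂ) * y^(m+1-1)) • c (m+1)‖
            = ((m:ℝ)+1) * ‖y‖^m * ‖c (m+1)‖ := by
          rw [norm_smul, norm_mul, norm_pow, Complex.norm_natCast]
          push_cast
          ring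
        rw [hLHS]
        calc ((m:ℝ)+1) * ‖y‖^m * ‖c (m+1)‖
            ≤ ((m:ℝ)+1) * r^m * (N * D^(m+1)) := by
              have hm0 : (0:ℝ) ≤ (m:ℝ)+1 := by positivity
              have := mul_le_mul h1 h2 (norm_nonneg _) (pow_nonneg hr0.le m)
              nlinarith [norm_nonneg (c (m+1)), pow_nonneg (norm_nonneg y) m]
          _ = (N*D/(r*D)) * (((m+1:ℕ):ℝ) * (r*D)^(m+1)) := by
              field_simp [hr0.ne', hD0.ne']
              push_cast
              ring
    · apply summable_of_ne_finset_zero (s := {0})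
      intro k hk
      have : k ≠ 0 := by simpa using hk
      simp [zero_pow this]
  refine ⟨r, hr0, hr1, X, ?_, ?_, ?_⟩
  · -- entrywise differentiability
    intro i j z hz
    have h1 : DifferentiableAt ℂ X z := (hder z hz).differentiableAt
    have h2 : DifferentiableAt ℂ
        (fun w => (LinearMap.toContinuousLinearMap
          (Matrix.entryLinearMap ℂ ℂ i j)) (X w)) z :=
      ((LinearMap.toContinuousLinearMap
        (Matrix.entryLinearMap ℂ ℂ i j)).differentiableAt).comp z h1
    exact h2
  · -- value at 0
    rw [hXdef]
    simp only
    rw [tsum_eq_single 0 ?_]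
    · simp [hc0]
    · intro k hk
      simp [zero_pow hk]
  · -- the differential equation
    intro z hzb
    have hz : ‖z‖ < r := mem_ball_zero_iff.1 hzb
    have hDer := hder z hzb
    have hofS : (Matrix.of fun i j => deriv (fun w => X w i j) z) = S z := by
      ext i j
      have hdij : HasDerivAt (fun w => X w i j) (S z i j) z := by
        have h3 := ((LinearMap.toContinuousLinearMap
          (Matrix.entryLinearMap ℂ ℂ i j)).hasFDerivAt (x := X z)).comp_hasDerivAt z hDer
        exact h3
      simpa using hdij.deriv
    rw [hofS]
    -- summability of the derivative series at z
    have hsd : Summable (fun k : ℕ => ((k:ℂ) * z^(k-1)) • c k) := by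
      apply Summable.of_norm
      apply Summable.of_nonneg_of_le (fun k => norm_nonneg _)
        (f := fun k : ℕ => (2*N*D) * ((k:ℝ) * (1/2)^k))
      · intro k
        match k with
        | 0 => simp
        | (m+1) =>
          rw [norm_smul, norm_mul, norm_pow, Complex.norm_natCast]
          have h1 : ‖z‖^(m+1-1) * ‖c (m+1)‖ ≤ (‖z‖*D)^m * (N * D) := by
            have hb : ‖c (m+1)‖ ≤ N * D^(m+1) := hc (m+1)
            have heq : ‖z‖^m * (N * D^(m+1)) = (‖z‖*D)^m * (N*D) := by
              rw [mul_pow]; ring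
            calc ‖z‖^(m+1-1) * ‖c (m+1)‖ = ‖z‖^m * ‖c (m+1)‖ := rfl
              _ ≤ ‖z‖^m * (N * D^(m+1)) :=
                  mul_le_mul_of_nonneg_left hb (pow_nonneg (norm_nonneg z) m)
              _ = (‖z‖*D)^m * (N*D) := heq
          have h2 : (‖z‖*D)^m ≤ (1/2)^m :=
            pow_le_pow_left₀ (mul_nonneg (norm_nonneg z) hD0.le) (hzfacts z hz).1 m
          have h3 : (2*N*D) * (((m+1:ℕ):ℝ) * (1/2)^(m+1))
              = ((m:ℝ)+1) * ((1/2)^m * (N*D)) := by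
            push_cast; ring
          rw [h3]
          have hm1 : (0:ℝ) ≤ (m:ℝ)+1 := by positivity
          have hND : (0:ℝ) ≤ N*D := mul_nonneg hN0 hD0.le
          calc ((m+1:ℕ):ℝ) * ‖z‖^(m+1-1) * ‖c (m+1)‖
              = ((m+1:ℕ):ℝ) * (‖z‖^(m+1-1) * ‖c (m+1)‖) := by ring
            _ ≤ ((m:ℝ)+1) * ((‖z‖*D)^m * (N*D)) := by
                push_cast
                exact mul_le_mul_of_nonneg_left h1 hm1
            _ ≤ ((m:ℝ)+1) * ((1/2)^m * (N*D)) := by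
                apply mul_le_mul_of_nonneg_left ?_ hm1
                exact mul_le_mul_of_nonneg_right h2 hND
      · apply Summable.mul_left
        have := summable_pow_mul_geometric_of_norm_lt_one (R := ℝ) 1
          (r := (1/2:ℝ)) (by rw [Real.norm_eq_abs, abs_of_nonneg] <;> norm_num)
        simpa using this
    -- the left-hand side as a single sum
    have h1 : HasSum (fun k : ℕ => z • (((k:ℂ) * z^(k-1)) • c k)) (z • S z) :=
      hsd.hasSum.const_smul z
    have hfun : (fun k : ℕ => z • (((k:ℂ) * z^(k-1)) • c k))
        = fun k : ℕ => ((k:ℂ) * z^k) • c k := by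
      funext k
      rw [smul_smul]
      congr 1
      match k with
      | 0 => simp
      | (m+1) =>
        have hm : (m+1:ℕ) - 1 = m := rfl
        rw [hm]
        push_cast
        ring
    rw [hfun] at h1
    have h2 : HasSum (fun k : ℕ => (z^k • c k) * A 0) (X z * A 0) :=
      ((hsc z hz).of_norm.hasSum).mul_right (A 0)
    have h2' : HasSum (fun k : ℕ => z^k • (c k * A 0)) (X z * A 0) := by
      simpa only [smul_mul_assoc] using h2
    have hzS := h1.add h2'
    -- the right-hand side as a Cauchy product
    have hCauchy : A z * X z = ∑' m : ℕ, ∑ kl ∈ Finset.HasAntidiagonal.antidiagonal m,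
        (z^kl.1 • p.coeff kl.1) * (z^kl.2 • c kl.2) := by
      rw [← (hAz z hz).tsum_eq]
      exact tsum_mul_tsum_eq_tsum_sum_antidiagonal_of_summable_norm (hsa z hz) (hsc z hz)
    rw [hCauchy, ← hzS.tsum_eq]
    apply tsum_congr
    intro m
    have hterm : ∀ kl ∈ Finset.HasAntidiagonal.antidiagonal m,
        (z^kl.1 • p.coeff kl.1) * (z^kl.2 • c kl.2)
          = z^m • (p.coeff kl.1 * c kl.2) := by
      intro kl hkl
      rw [smul_mul_smul_comm, ← pow_add, Finset.HasAntidiagonal.mem_antidiagonal.1 hkl]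
    rw [Finset.sum_congr rfl hterm, ← Finset.smul_sum]
    have hsum2 : ∑ kl ∈ Finset.HasAntidiagonal.antidiagonal m, p.coeff kl.1 * c kl.2
        = (m:ℂ) • c m + c m * A 0 := by
      rw [Finset.Nat.sum_antidiagonal_eq_sum_range_succ_mk]
      match m with
      | 0 => simp [hc0, ha0]
      | (k+1) =>
        rw [Finset.sum_range_succ']
        have he : ∀ i ∈ Finset.range (k+1),
            p.coeff (i+1) * c (k+1-(i+1)) = p.coeff (i+1) * c (k-i) := by
          intro i _
          have h : k+1-(i+1) = k-i := by omega
          rw [h]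
        rw [Finset.sum_congr rfl he]
        have hLc := hinv (k+1) (by omega)
          (∑ i ∈ Finset.range (k+1), p.coeff (i+1) * c (k-i))
        rw [← hcsucc k] at hLc
        rw [show (∑ i ∈ Finset.range (k+1), p.coeff (i+1) * c (k-i))
            = Lmap (k+1) (c (k+1)) from hLc.symm, hLapp, ha0]
        simp only [Nat.sub_zero, sub_add_cancel]
    rw [hsum2, smul_add, smul_smul, mul_comm (z^m) ((m:ℂ))]
end

section
/- Let K be a field and let f, g ∈ K[t] be monic polynomials of degree n that both split into linear factors over K, with f ≠ g. Let V = K[t]/(f), let A : V → V be multiplication by t, and let B : V → V be the K-linear map with B(t^i) = t^{i+1} for 0 ≤ i ≤ n−2 and B(t^{n-1}) = t^n − g(t). Let k = gcd(f, g) and let W ⊆ V be the ideal of K[t]/(f) generated by the class of k. Then: W is nonzero, W is stable under both A and B, and every nonzero K-subspace of V stable under both A and B contains W. In particular, W has no A,B-stable subspaces other than 0 and W itself. -/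
open Polynomial

/-- Let `f ≠ g` be monic split polynomials of degree `n` over `K`, `V = K[t]/(f)`,
`A` multiplication by `t` and `B` the companion operator of `g`.  Let `W` be the ideal
of `V` generated by the class of `k = gcd(f,g)`.  Then `W` is nonzero, stable under `A`
and `B`, and contained in every nonzero `A,B`-stable subspace; in particular `W` has no
`A,B`-stable subspaces other than `0` and `W`. -/
theorem stmt_13 {K : Type*} [Field K] (n : ℕ) (hn : 0 < n) (f g : Polynomial K)
    (hfm : f.Monic) (hgm : g.Monic) (hfd : f.natDegree = n) (hgd : g.natDegree = n)
    (hfs : f.Splits) (hgs : g.Splits) (hfg : f ≠ g)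
    (A B : AdjoinRoot f →ₗ[K] AdjoinRoot f)
    (hA : ∀ v : AdjoinRoot f, A v = AdjoinRoot.root f * v)
    (hB1 : ∀ i : ℕ, i + 1 ≤ n - 1 →
      B (AdjoinRoot.root f ^ i) = AdjoinRoot.root f ^ (i + 1))
    (hB2 : B (AdjoinRoot.root f ^ (n - 1)) =
      AdjoinRoot.mk f (Polynomial.X ^ n - g))
    (k : Polynomial K)
    (hk : k.Monic ∧ k ∣ f ∧ k ∣ g ∧ ∀ d : Polynomial K, d ∣ f → d ∣ g → d ∣ k)
    (W : Submodule K (AdjoinRoot f))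
    (hW : ∀ v : AdjoinRoot f, v ∈ W ↔ ∃ p : Polynomial K, v = AdjoinRoot.mk f (p * k)) :
    W ≠ ⊥ ∧
    (∀ v ∈ W, A v ∈ W ∧ B v ∈ W) ∧
    (∀ U : Submodule K (AdjoinRoot f),
      (∀ v ∈ U, A v ∈ U ∧ B v ∈ U) → U ≠ ⊥ → W ≤ U) ∧
    (∀ U : Submodule K (AdjoinRoot f), U ≤ W →
      (∀ v ∈ U, A v ∈ U ∧ B v ∈ U) → U = ⊥ ∨ U = W) := by
  obtain ⟨hkm, hkf, hkg, hkgcd⟩ := hk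
  have hf0 : f ≠ 0 := hfm.ne_zero
  obtain ⟨m, rfl⟩ : ∃ m, n = m + 1 := ⟨n - 1, (Nat.succ_pred_eq_of_pos hn).symm⟩
  have hB1' : ∀ i : ℕ, i < m →
      B (AdjoinRoot.root f ^ i) = AdjoinRoot.root f ^ (i + 1) := by
    intro i hi; exact hB1 i (by omega)
  have hB2' : B (AdjoinRoot.root f ^ m) = AdjoinRoot.mk f (X ^ (m + 1) - g) := hB2
  -- mk of X * p
  have hroot : ∀ p : K[X], AdjoinRoot.mk f (X * p)
      = AdjoinRoot.root f * AdjoinRoot.mk f p := by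
    intro p; rw [map_mul, AdjoinRoot.mk_X]
  -- decomposition of mk p as a sum over the power basis
  have hsum : ∀ p : K[X], p.natDegree < m + 1 →
      AdjoinRoot.mk f p = ∑ i ∈ Finset.range (m + 1), p.coeff i • AdjoinRoot.root f ^ i := by
    intro p hp
    conv_lhs => rw [Polynomial.as_sum_range' p (m + 1) hp]
    rw [map_sum]
    refine Finset.sum_congr rfl fun i _ => ?_
    rw [← Polynomial.C_mul_X_pow_eq_monomial, ← Polynomial.smul_eq_C_mul,
      ← AdjoinRoot.smul_mk, map_pow, AdjoinRoot.mk_X]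
  -- the key formula for B
  have keyB : ∀ p : K[X], p.natDegree < m + 1 →
      B (AdjoinRoot.mk f p) = AdjoinRoot.mk f (X * p)
        - p.coeff m • AdjoinRoot.mk f g := by
    intro p hp
    have e1 : B (AdjoinRoot.mk f p)
        = (∑ i ∈ Finset.range m, p.coeff i • AdjoinRoot.root f ^ (i + 1))
          + p.coeff m • (AdjoinRoot.root f ^ (m + 1) - AdjoinRoot.mk f g) := by
      rw [hsum p hp, map_sum, Finset.sum_range_succ]
      congr 1
      · refine Finset.sum_congr rfl fun i hi => ?_
        rw [map_smul, hB1' i (Finset.mem_range.mp hi)]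
      · rw [map_smul, hB2', map_sub, map_pow, AdjoinRoot.mk_X]
    have e2 : AdjoinRoot.mk f (X * p)
        = (∑ i ∈ Finset.range m, p.coeff i • AdjoinRoot.root f ^ (i + 1))
          + p.coeff m • AdjoinRoot.root f ^ (m + 1) := by
      rw [hroot, hsum p hp, Finset.mul_sum, ← Finset.sum_range_succ]
      refine Finset.sum_congr rfl fun i _ => ?_
      rw [mul_smul_comm, ← pow_succ']
    rw [e1, e2, smul_sub]
    abel
  -- part 1 : W ≠ ⊥
  have hkW : AdjoinRoot.mk f k ∈ W := (hW _).mpr ⟨1, by rw [one_mul]⟩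
  have hkne : AdjoinRoot.mk f k ≠ 0 := by
    intro h
    have hdvd : f ∣ k := AdjoinRoot.mk_eq_zero.mp h
    have hkf' : k = f := Polynomial.eq_of_monic_of_associated hkm hfm
      (associated_of_dvd_dvd hkf hdvd)
    apply hfg
    obtain ⟨c, hc⟩ := hkf' ▸ hkg
    have hc0 : c ≠ 0 := by
      rintro rfl; rw [mul_zero] at hc; exact hgm.ne_zero hc
    have hnd := Polynomial.natDegree_mul hf0 hc0
    rw [← hc, hgd, hfd] at hnd
    have hdeg : c.natDegree = 0 := by omega
    have hlc : g.leadingCoeff = f.leadingCoeff * c.leadingCoeff := by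
      rw [hc, Polynomial.leadingCoeff_mul]
    rw [hgm.leadingCoeff, hfm.leadingCoeff, one_mul] at hlc
    have hc1 : c = 1 := by
      rw [Polynomial.eq_C_of_natDegree_eq_zero hdeg]
      rw [Polynomial.leadingCoeff, hdeg] at hlc
      rw [← hlc, map_one]
    rw [hc, hc1, mul_one]
  have part1 : W ≠ ⊥ := by
    intro h
    rw [h, Submodule.mem_bot] at hkW
    exact hkne hkW
  -- part 2 : stability of W
  have part2 : ∀ v ∈ W, A v ∈ W ∧ B v ∈ W := by
    intro v hv
    obtain ⟨p, rfl⟩ := (hW v).mp hv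
    constructor
    · rw [hA, ← hroot]
      exact (hW _).mpr ⟨X * p, by rw [mul_assoc]⟩
    · -- reduce mod f
      set r : K[X] := (p * k) %ₘ f with hr
      have hmkr : AdjoinRoot.mk f (p * k) = AdjoinRoot.mk f r := by
        conv_lhs => rw [← Polynomial.modByMonic_add_div (p * k) f]
        rw [map_add, map_mul, AdjoinRoot.mk_self, zero_mul, add_zero]
      have hrd : r.natDegree < m + 1 := by
        rcases eq_or_ne r 0 with h0 | h0
        · rw [h0]; simpa using hn
        · have := Polynomial.degree_modByMonic_lt (p * k) hfm
          have := Polynomial.natDegree_lt_natDegree h0 this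
          omega
      obtain ⟨a, ha⟩ : k ∣ r := by
        have : k ∣ f * ((p * k) /ₘ f) := Dvd.dvd.mul_right hkf _
        have h2 : r = p * k - f * ((p * k) /ₘ f) := by
          rw [hr, eq_sub_iff_add_eq, Polynomial.modByMonic_add_div (p * k) f]
        rw [h2]
        exact dvd_sub (Dvd.intro_left p rfl) this
      obtain ⟨b, hb⟩ := hkg
      rw [hmkr, keyB r hrd]
      refine (hW _).mpr ⟨X * a - C (r.coeff m) * b, ?_⟩
      rw [AdjoinRoot.smul_mk, Polynomial.smul_eq_C_mul, ← map_sub]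
      congr 1
      rw [ha, hb]; ring
  -- part 3
  have part3 : ∀ U : Submodule K (AdjoinRoot f),
      (∀ v ∈ U, A v ∈ U ∧ B v ∈ U) → U ≠ ⊥ → W ≤ U := by
    intro U hUst hU0
    -- U is closed under multiplication by polynomials in the root
    have hXmem : ∀ q : K[X], AdjoinRoot.mk f q ∈ U → AdjoinRoot.mk f (X * q) ∈ U := by
      intro q hq
      rw [hroot, ← hA]
      exact (hUst _ hq).1
    have hCmul : ∀ c q : K[X], AdjoinRoot.mk f q ∈ U → AdjoinRoot.mk f (c * q) ∈ U := by
      intro c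
      induction c using Polynomial.induction_on with
      | C a =>
        intro q hq
        rw [← Polynomial.smul_eq_C_mul, ← AdjoinRoot.smul_mk]
        exact U.smul_mem a hq
      | add c1 c2 ih1 ih2 =>
        intro q hq
        rw [add_mul, map_add]
        exact U.add_mem (ih1 q hq) (ih2 q hq)
      | monomial i a ih =>
        intro q hq
        have : C a * X ^ (i + 1) * q = X * (C a * X ^ i * q) := by ring
        rw [this]
        exact hXmem _ (ih q hq)
    -- the ideal of polynomials mapping into U
    let I : Ideal K[X] :=
      { carrier := {p | AdjoinRoot.mk f p ∈ U}
        add_mem' := fun {x y} hx hy => by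
          simp only [Set.mem_setOf_eq, map_add] at *
          exact U.add_mem hx hy
        zero_mem' := by simp only [Set.mem_setOf_eq, map_zero]; exact U.zero_mem
        smul_mem' := fun c p hp => by
          simp only [Set.mem_setOf_eq, smul_eq_mul] at *
          exact hCmul c p hp }
    have hmemI : ∀ p : K[X], p ∈ I ↔ AdjoinRoot.mk f p ∈ U := fun p => Iff.rfl
    obtain ⟨d, hdI⟩ := (Submodule.IsPrincipal.principal I)
    have hdI' : ∀ p : K[X], p ∈ I ↔ d ∣ p := by
      intro p
      rw [hdI]
      exact Ideal.mem_span_singleton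
    have hfI : f ∈ I := by
      rw [hmemI, AdjoinRoot.mk_self]
      exact U.zero_mem
    have hdf : d ∣ f := (hdI' f).mp hfI
    -- d is not a multiple of f
    obtain ⟨u, huU, hu0⟩ := Submodule.exists_mem_ne_zero_of_ne_bot hU0
    obtain ⟨p, rfl⟩ := AdjoinRoot.mk_surjective u
    have hpI : p ∈ I := (hmemI p).mpr huU
    have hdp : d ∣ p := (hdI' p).mp hpI
    have hd0 : d ≠ 0 := by
      rintro rfl
      rw [zero_dvd_iff] at hdp
      rw [hdp, map_zero] at hu0
      exact hu0 rfl
    have hfnd : ¬ f ∣ d := by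
      intro h
      exact hu0 (AdjoinRoot.mk_eq_zero.mpr (h.trans hdp))
    have hddeg : d.natDegree < m + 1 := by
      obtain ⟨e, he⟩ := hdf
      have he0 : e ≠ 0 := by
        rintro rfl; rw [mul_zero] at he; exact hf0 he
      have hnd := Polynomial.natDegree_mul hd0 he0
      rw [← he, hfd] at hnd
      rcases Nat.lt_or_ge d.natDegree (m + 1) with h | h
      · exact h
      · exfalso
        have hedeg : e.natDegree = 0 := by omega
        have he' : e = C (e.coeff 0) := Polynomial.eq_C_of_natDegree_eq_zero hedeg
        have hec : e.coeff 0 ≠ 0 := by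
          intro hc; rw [hc, map_zero] at he'; exact he0 he'
        apply hfnd
        refine ⟨C (e.coeff 0)⁻¹, ?_⟩
        have hcc : (C (e.coeff 0) : K[X]) * C (e.coeff 0)⁻¹ = 1 := by
          rw [← map_mul, mul_inv_cancel₀ hec, map_one]
        calc d = d * (C (e.coeff 0) * C (e.coeff 0)⁻¹) := by rw [hcc, mul_one]
          _ = d * e * C (e.coeff 0)⁻¹ := by rw [← he', mul_assoc]
          _ = f * C (e.coeff 0)⁻¹ := by rw [← he]
    -- the element X^(m - d.natDegree) * d of I has top coefficient ≠ 0
    set q : K[X] := X ^ (m - d.natDegree) * d with hq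
    have hqI : q ∈ I := by
      rw [hdI']
      exact Dvd.intro_left _ rfl
    have hqd : q.natDegree < m + 1 := by
      have : q.natDegree ≤ (m - d.natDegree) + d.natDegree := by
        calc q.natDegree ≤ (X ^ (m - d.natDegree) : K[X]).natDegree + d.natDegree :=
              Polynomial.natDegree_mul_le
          _ = (m - d.natDegree) + d.natDegree := by rw [Polynomial.natDegree_X_pow]
      omega
    have hqc : q.coeff m = d.leadingCoeff := by
      rw [hq, Polynomial.leadingCoeff]
      have h1 := Polynomial.coeff_X_pow_mul d (m - d.natDegree) d.natDegree
      rw [show d.natDegree + (m - d.natDegree) = m from by omega] at h1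
      exact h1
    have hqc0 : q.coeff m ≠ 0 := by
      rw [hqc]
      exact Polynomial.leadingCoeff_ne_zero.mpr hd0
    -- use B to show mk g ∈ U
    have hUq : AdjoinRoot.mk f q ∈ U := (hmemI q).mp hqI
    have hBq := (hUst _ hUq).2
    rw [keyB q hqd] at hBq
    have hXq : AdjoinRoot.mk f (X * q) ∈ U := hXmem q hUq
    have hgU : AdjoinRoot.mk f g ∈ U := by
      have hsm : q.coeff m • AdjoinRoot.mk f g ∈ U := by
        have := U.sub_mem hXq hBq
        simpa using this
      have := U.smul_mem (q.coeff m)⁻¹ hsm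
      rwa [smul_smul, inv_mul_cancel₀ hqc0, one_smul] at this
    have hdg : d ∣ g := (hdI' g).mp ((hmemI g).mpr hgU)
    have hdk : d ∣ k := hkgcd d hdf hdg
    intro v hv
    obtain ⟨p', rfl⟩ := (hW v).mp hv
    have : p' * k ∈ I := (hdI' _).mpr (Dvd.dvd.mul_left hdk p')
    exact (hmemI _).mp this
  refine ⟨part1, part2, part3, ?_⟩
  -- part 4
  intro U hUW hUst
  rcases eq_or_ne U ⊥ with h | h
  · exact Or.inl h
  · exact Or.inr (le_antisymm hUW (part3 U hUst h))
end

section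
/- Let K be a field and let f, g ∈ K[t] be monic polynomials of degree n that both split into linear factors over K and have no common root (gcd(f, g) = 1). Let V = K[t]/(f), let A : V → V be multiplication by t, and let B : V → V be the K-linear map with B(t^i) = t^{i+1} for 0 ≤ i ≤ n−2 and B(t^{n-1}) = t^n − g(t). Then the only K-subspaces of V stable under both A and B are 0 and V; that is, V is irreducible under the group (or algebra) generated by A and B. -/
/-- If `f, g` are coprime monic split polynomials of degree `n` over `K`, then
`V = K[t]/(f)` is irreducible under `A` (multiplication by `t`) and the companion
operator `B` of `g`: the only subspaces stable under both are `0` and `V`. -/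
theorem stmt_14 {K : Type*} [Field K] (n : ℕ) (f g : Polynomial K)
    (hfm : f.Monic) (hgm : g.Monic) (hfd : f.natDegree = n) (hgd : g.natDegree = n)
    (hfs : f.Splits) (hgs : g.Splits)
    (hcop : IsCoprime f g)
    (A B : AdjoinRoot f →ₗ[K] AdjoinRoot f)
    (hA : ∀ v : AdjoinRoot f, A v = AdjoinRoot.root f * v)
    (hB1 : ∀ i : ℕ, i + 1 ≤ n - 1 →
      B (AdjoinRoot.root f ^ i) = AdjoinRoot.root f ^ (i + 1))
    (hB2 : B (AdjoinRoot.root f ^ (n - 1)) =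
      AdjoinRoot.mk f (Polynomial.X ^ n - g)) :
    ∀ U : Submodule K (AdjoinRoot f),
      (∀ v ∈ U, A v ∈ U ∧ B v ∈ U) → U = ⊥ ∨ U = ⊤ := by
  intro U hU
  -- trivial case n = 0
  rcases Nat.eq_zero_or_pos n with hn | hn
  · left
    have hf1 : f = 1 := by
      have := Polynomial.Monic.natDegree_eq_zero hfm
      exact this.mp (hfd.trans hn)
    have hzero : ∀ v : AdjoinRoot f, v = 0 := by
      intro v
      have h1 : (1 : AdjoinRoot f) = 0 := by
        rw [← map_one (AdjoinRoot.mk f), ← hf1, AdjoinRoot.mk_self]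
      calc v = v * 1 := (mul_one v).symm
        _ = 0 := by rw [h1, mul_zero]
    ext v
    simp [hzero v]
  -- main case
  set root := AdjoinRoot.root f with hroot
  have hMul : ∀ (k : ℕ) (u : AdjoinRoot f), u ∈ U → root ^ k * u ∈ U := by
    intro k
    induction k with
    | zero => intro u hu; simpa using hu
    | succ k ih =>
      intro u hu
      have := (hU _ (ih u hu)).1
      rw [hA] at this
      have e : root ^ (k + 1) * u = root * (root ^ k * u) := by ring
      rwa [e]
  have hMulAny : ∀ (q : Polynomial K) (u : AdjoinRoot f), u ∈ U →
      AdjoinRoot.mk f q * u ∈ U := by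
    intro q
    induction q using Polynomial.induction_on' with
    | add p r hp hr =>
      intro u hu
      rw [map_add, add_mul]
      exact U.add_mem (hp u hu) (hr u hu)
    | monomial k a =>
      intro u hu
      have e : AdjoinRoot.mk f (Polynomial.monomial k a) * u = a • (root ^ k * u) := by
        rw [← Polynomial.C_mul_X_pow_eq_monomial, map_mul, AdjoinRoot.mk_C,
          map_pow, AdjoinRoot.mk_X, Algebra.smul_def, AdjoinRoot.algebraMap_eq, mul_assoc]
      rw [e]
      exact U.smul_mem a (hMul k u hu)
  -- key computation
  have key : ∀ p : Polynomial K, p.natDegree < n →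
      A (AdjoinRoot.mk f p) - B (AdjoinRoot.mk f p)
        = p.coeff (n - 1) • AdjoinRoot.mk f g := by
    intro p hp
    have hrep := Polynomial.as_sum_range' p n hp
    have hmk : AdjoinRoot.mk f p
        = ∑ i ∈ Finset.range n, p.coeff i • root ^ i := by
      conv_lhs => rw [hrep]
      rw [map_sum]
      refine Finset.sum_congr rfl fun i _ => ?_
      rw [← Polynomial.C_mul_X_pow_eq_monomial, map_mul, AdjoinRoot.mk_C,
        map_pow, AdjoinRoot.mk_X, Algebra.smul_def, AdjoinRoot.algebraMap_eq]
    rw [hmk, map_sum, map_sum, ← Finset.sum_sub_distrib]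
    rw [Finset.sum_eq_single (n - 1)]
    · rw [map_smul, map_smul, ← smul_sub]
      congr 1
      have hAr : A (root ^ (n - 1)) = AdjoinRoot.mk f (Polynomial.X ^ n) := by
        rw [hA, ← pow_succ']
        rw [Nat.sub_add_cancel hn]
        rw [map_pow, AdjoinRoot.mk_X]
      rw [hAr, hB2, ← map_sub]
      congr 1
      ring
    · intro i hi hne
      have hile : i + 1 ≤ n - 1 := by
        have : i < n := Finset.mem_range.mp hi
        omega
      rw [map_smul, map_smul, ← smul_sub, hB1 i hile, hA, ← pow_succ', sub_self, smul_zero]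
    · intro h
      exact absurd (Finset.mem_range.mpr (by omega)) h
  -- conclude
  by_cases hbot : U = ⊥
  · exact Or.inl hbot
  right
  obtain ⟨u, huU, hune⟩ := Submodule.exists_mem_ne_zero_of_ne_bot hbot
  obtain ⟨q, rfl⟩ := AdjoinRoot.mk_surjective u
  set p := q %ₘ f with hpdef
  have hfne : f ≠ 0 := hfm.ne_zero
  have hmkp : AdjoinRoot.mk f p = AdjoinRoot.mk f q := by
    rw [AdjoinRoot.mk_eq_mk]
    exact ⟨-(q /ₘ f), by rw [hpdef]; linear_combination Polynomial.modByMonic_add_div q f⟩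
  have hpne : p ≠ 0 := by
    intro h
    apply hune
    rw [← hmkp, h, map_zero]
  have hpdeg : p.natDegree < n := by
    have h1 := Polynomial.natDegree_modByMonic_lt q hfm (by
      intro h; rw [h] at hfd; simp at hfd; omega)
    rw [hfd] at h1
    exact h1
  set d := p.natDegree with hd
  set r := Polynomial.X ^ (n - 1 - d) * p with hr
  have hrU : AdjoinRoot.mk f r ∈ U := by
    rw [hr, map_mul, map_pow, AdjoinRoot.mk_X]
    exact hMul _ _ (by rw [hmkp]; exact huU)
  have hrdeg : r.natDegree = n - 1 := by
    rw [hr, Polynomial.natDegree_mul (pow_ne_zero _ Polynomial.X_ne_zero) hpne, Polynomial.natDegree_X_pow]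
    omega
  have hrcoeff : r.coeff (n - 1) = p.leadingCoeff := by
    rw [← hrdeg, ← Polynomial.leadingCoeff, hr, Polynomial.leadingCoeff_mul,
      Polynomial.leadingCoeff_X_pow, one_mul]
  have hrdlt : r.natDegree < n := by omega
  have hgU : AdjoinRoot.mk f g ∈ U := by
    have hk := key r hrdlt
    have hABU : A (AdjoinRoot.mk f r) - B (AdjoinRoot.mk f r) ∈ U :=
      U.sub_mem (hU _ hrU).1 (hU _ hrU).2
    rw [hk, hrcoeff] at hABU
    have hlc : p.leadingCoeff ≠ 0 := Polynomial.leadingCoeff_ne_zero.mpr hpne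
    have := U.smul_mem p.leadingCoeff⁻¹ hABU
    rwa [smul_smul, inv_mul_cancel₀ hlc, one_smul] at this
  obtain ⟨a, b, hab⟩ := hcop
  have hone : (1 : AdjoinRoot f) ∈ U := by
    have h1 : (1 : AdjoinRoot f) = AdjoinRoot.mk f b * AdjoinRoot.mk f g := by
      rw [← map_mul, ← map_one (AdjoinRoot.mk f), ← hab, map_add, map_mul,
        AdjoinRoot.mk_self, mul_zero, zero_add]
    rw [h1]
    exact hMulAny b _ hgU
  rw [Submodule.eq_top_iff']
  intro v
  obtain ⟨w, rfl⟩ := AdjoinRoot.mk_surjective v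
  have := hMulAny w 1 hone
  rwa [mul_one] at this
end

section
/- (Levelt's rigidity theorem) Let K be a field, let a_1, …, a_n, b_1, …, b_n ∈ K be nonzero elements with a_i ≠ b_j for all i, j, and set f(t) = ∏_{i=1}^n (t − a_i) and g(t) = ∏_{j=1}^n (t − b_j). Suppose a, b ∈ GL_n(K) are such that (1) the characteristic polynomial of a is f and the characteristic polynomial of b is g, and (2) a^{-1}b is the identity on a codimension-one subspace of K^n (equivalently, ker(a − b) has dimension at least n−1). Then there exists P ∈ GL_n(K) such that P a P^{-1} is the companion matrix of f and P b P^{-1} is the companion matrix of g. In particular, the pair (a, b) is determined up to simultaneous conjugation by the polynomials f and g. -/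
open Polynomial Matrix Module

/-- The companion matrix of a monic polynomial `p = Xⁿ + c_{n-1}X^{n-1} + ⋯ + c₀` of
degree `n`: ones on the subdiagonal, last column `(-c₀, …, -c_{n-1})ᵀ`, zeros elsewhere. -/
def companionMatrix {R : Type*} [CommRing R] (n : ℕ) (p : Polynomial R) :
    Matrix (Fin n) (Fin n) R :=
  Matrix.of fun i j =>
    if (j : ℕ) + 1 = n then -p.coeff (i : ℕ)
    else if (i : ℕ) = (j : ℕ) + 1 then 1 else 0

/-- `aeval` commutes with restriction to an invariant subspace. -/
lemma aeval_restrict_coe {K V : Type*} [Field K] [AddCommGroup V] [Module K V]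
    (A : V →ₗ[K] V) (U : Submodule K V) (hU : ∀ x ∈ U, A x ∈ U) (p : Polynomial K) (x : U) :
    ((Polynomial.aeval (A.restrict hU) p) x : V) = Polynomial.aeval A p (x : V) := by
  induction p using Polynomial.induction_on' with
  | add p q hp hq => simp [hp, hq]
  | monomial k c =>
      simp only [Polynomial.aeval_monomial, Module.End.mul_apply, Module.algebraMap_end_apply,
        LinearMap.smul_apply]
      rw [Module.End.pow_restrict]
      simp [LinearMap.restrict_apply]

lemma sum_mulVec' {K : Type*} [Field K] {n : ℕ} (s : Finset ℕ)
    (M : ℕ → Matrix (Fin n) (Fin n) K) (v : Fin n → K) :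
    (∑ i ∈ s, M i).mulVec v = ∑ i ∈ s, (M i).mulVec v := by
  classical
  induction s using Finset.induction with
  | empty => simp
  | insert x s h ih => simp [Finset.sum_insert h, Matrix.add_mulVec, ih]

/-- (Levelt's rigidity theorem) If `a, b ∈ GLₙ(K)` have characteristic polynomials
`f = ∏(t - αᵢ)`, `g = ∏(t - βⱼ)` with all `αᵢ, βⱼ` nonzero and `αᵢ ≠ βⱼ`, and `a⁻¹b`
is the identity on a codimension one subspace (i.e. `ker(a - b)` has dimension at least
`n - 1`), then `a` and `b` are simultaneously conjugate to the companion matrices of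
`f` and `g`. -/
theorem stmt_15 {K : Type*} [Field K] (n : ℕ) (α β : Fin n → K)
    (hα0 : ∀ i, α i ≠ 0) (hβ0 : ∀ j, β j ≠ 0)
    (hαβ : ∀ i j, α i ≠ β j)
    (f g : Polynomial K)
    (hf : f = ∏ i : Fin n, (Polynomial.X - Polynomial.C (α i)))
    (hg : g = ∏ j : Fin n, (Polynomial.X - Polynomial.C (β j)))
    (a b : Matrix (Fin n) (Fin n) K)
    (ha : IsUnit a) (hb : IsUnit b)
    (hca : a.charpoly = f) (hcb : b.charpoly = g)
    (hker : n - 1 ≤ Module.finrank K (LinearMap.ker (Matrix.toLin' (a - b)))) :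
    ∃ P : Matrix (Fin n) (Fin n) K, IsUnit P ∧
      P * a * P⁻¹ = companionMatrix n f ∧ P * b * P⁻¹ = companionMatrix n g := by
  classical
  rcases Nat.eq_zero_or_pos n with hn | hn
  · subst hn
    exact ⟨1, isUnit_one, Subsingleton.elim _ _, Subsingleton.elim _ _⟩
  -- f and g are coprime
  have hcop : IsCoprime f g := by
    rw [hf, hg]
    refine IsCoprime.prod_left fun i _ => IsCoprime.prod_right fun j _ => ?_
    refine ⟨-Polynomial.C ((α i - β j)⁻¹), Polynomial.C ((α i - β j)⁻¹), ?_⟩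
    have hne : α i - β j ≠ 0 := sub_ne_zero.mpr (hαβ i j)
    have h1 : (Polynomial.C ((α i - β j)⁻¹)) * (Polynomial.C (α i - β j)) = 1 := by
      rw [← Polynomial.C_mul, inv_mul_cancel₀ hne, Polynomial.C_1]
    calc -Polynomial.C ((α i - β j)⁻¹) * (X - Polynomial.C (α i))
          + Polynomial.C ((α i - β j)⁻¹) * (X - Polynomial.C (β j))
        = Polynomial.C ((α i - β j)⁻¹) * (Polynomial.C (α i) - Polynomial.C (β j)) := by ring
      _ = 1 := by rw [← Polynomial.C_sub]; exact h1
  have hfm : f.Monic := hf ▸ monic_prod_of_monic _ _ fun i _ => monic_X_sub_C _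
  have hgm : g.Monic := hg ▸ monic_prod_of_monic _ _ fun i _ => monic_X_sub_C _
  have hfd : f.natDegree = n := by
    rw [hf, Polynomial.natDegree_prod_of_monic _ _ fun i _ => monic_X_sub_C _]
    simp
  have hgd : g.natDegree = n := by
    rw [hg, Polynomial.natDegree_prod_of_monic _ _ fun i _ => monic_X_sub_C _]
    simp
  have hfa : (Polynomial.aeval a) f = 0 := hca ▸ Matrix.aeval_self_charpoly a
  have hgb : (Polynomial.aeval b) g = 0 := hcb ▸ Matrix.aeval_self_charpoly b
  have hfcn : f.coeff n = 1 := by rw [← hfd]; exact hfm.coeff_natDegree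
  have hgcn : g.coeff n = 1 := by rw [← hgd]; exact hgm.coeff_natDegree
  have hpow_a : a ^ n = -∑ k ∈ Finset.range n, f.coeff k • a ^ k := by
    have h := (Polynomial.aeval_eq_sum_range (p := f) a).symm.trans hfa
    rw [hfd, Finset.sum_range_succ, hfcn, one_smul] at h
    exact (eq_neg_of_add_eq_zero_right h)
  have hpow_b : b ^ n = -∑ k ∈ Finset.range n, g.coeff k • b ^ k := by
    have h := (Polynomial.aeval_eq_sum_range (p := g) b).symm.trans hgb
    rw [hgd, Finset.sum_range_succ, hgcn, one_smul] at h
    exact (eq_neg_of_add_eq_zero_right h)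
  -- the subspaces κ j
  set κ : ℕ → Submodule K (Fin n → K) :=
    fun j => LinearMap.ker (Matrix.toLin' ((a - b) * a ^ j)) with hκ
  have hκrank : ∀ j, n - 1 ≤ finrank K (κ j) := by
    intro j
    have hinv : Invertible (a ^ j) := (ha.pow j).invertible
    set e := Matrix.toLinearEquiv' (a ^ j) hinv with he
    have h1 : κ j = Submodule.comap (Matrix.toLin' (a ^ j))
        (LinearMap.ker (Matrix.toLin' (a - b))) := by
      rw [hκ]
      dsimp only
      rw [Matrix.toLin'_mul, LinearMap.ker_comp]
    have h2 : (e : (Fin n → K) →ₗ[K] (Fin n → K)) = Matrix.toLin' (a ^ j) :=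
      Matrix.toLinearEquiv'_apply (a ^ j) hinv
    rw [h1, ← h2, Submodule.comap_equiv_eq_map_symm, LinearEquiv.finrank_map_eq]
    exact hker
  have hWrank : ∀ k : ℕ, n - k ≤ finrank K ↥(⨅ j ∈ Finset.range k, κ j) := by
    intro k
    induction k with
    | zero =>
      rw [show (⨅ j ∈ Finset.range 0, κ j : Submodule K (Fin n → K)) = ⊤ from by simp]
      simp [Module.finrank_fin_fun]
    | succ k ih =>
      rw [Finset.range_add_one, Finset.iInf_insert k (Finset.range k) κ]
      have h1 := Submodule.finrank_sup_add_finrank_inf_eq (κ k) (⨅ j ∈ Finset.range k, κ j)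
      have h2 : finrank K ↥((κ k) ⊔ ⨅ j ∈ Finset.range k, κ j) ≤ n := by
        simpa [Module.finrank_fin_fun] using
          Submodule.finrank_le ((κ k) ⊔ ⨅ j ∈ Finset.range k, κ j)
      have h3 := hκrank k
      omega
  obtain ⟨v, hvW, hv0⟩ : ∃ v, v ∈ (⨅ j ∈ Finset.range (n - 1), κ j) ∧ v ≠ 0 := by
    apply Submodule.exists_mem_ne_zero_of_ne_bot
    intro hbot
    have := hWrank (n - 1)
    rw [hbot, finrank_bot] at this
    omega
  have hvκ : ∀ j < n - 1, (a - b).mulVec ((a ^ j).mulVec v) = 0 := by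
    intro j hj
    have hvj : v ∈ κ j := by
      have h := (Submodule.mem_iInf _).mp hvW j
      exact (Submodule.mem_iInf _).mp h (Finset.mem_range.mpr hj)
    rw [hκ] at hvj
    have h := LinearMap.mem_ker.mp hvj
    rw [Matrix.toLin'_apply] at h
    rw [Matrix.mulVec_mulVec]
    exact h
  -- the Krylov vectors
  set w : ℕ → (Fin n → K) := fun j => (a ^ j).mulVec v with hw
  have hw0 : w 0 = v := by simp [hw]
  have hw_a : ∀ j, a.mulVec (w j) = w (j + 1) := by
    intro j
    rw [hw]
    dsimp only
    rw [Matrix.mulVec_mulVec, ← pow_succ']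
  have hw_b : ∀ j, j < n - 1 → b.mulVec (w j) = w (j + 1) := by
    intro j hj
    have h := hvκ j hj
    rw [Matrix.sub_mulVec] at h
    have h2 : b.mulVec (w j) = a.mulVec (w j) := by
      rw [hw]
      exact (sub_eq_zero.mp h).symm
    rw [h2, hw_a]
  -- Cayley–Hamilton at the vector level
  have hwn_a : w n = -∑ k ∈ Finset.range n, f.coeff k • w k := by
    rw [hw]
    dsimp only
    rw [hpow_a, Matrix.neg_mulVec, sum_mulVec']
    congr 1
    exact Finset.sum_congr rfl fun k _ => Matrix.smul_mulVec _ _ _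
  have hwb_pow : ∀ j, j ≤ n - 1 → (b ^ j).mulVec v = w j := by
    intro j
    induction j with
    | zero => intro _; simp [hw]
    | succ j ih =>
      intro hj
      have hj' : j < n - 1 := by omega
      rw [pow_succ', ← Matrix.mulVec_mulVec, ih (by omega), hw_b j hj']
  have hwn_b : b.mulVec (w (n - 1)) = -∑ k ∈ Finset.range n, g.coeff k • w k := by
    have h1 : b.mulVec (w (n - 1)) = (b ^ n).mulVec v := by
      rw [← hwb_pow (n - 1) le_rfl, Matrix.mulVec_mulVec, ← pow_succ',
        show n - 1 + 1 = n from by omega]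
    rw [h1, hpow_b, Matrix.neg_mulVec, sum_mulVec']
    congr 1
    refine Finset.sum_congr rfl fun k hk => ?_
    rw [Matrix.smul_mulVec, hwb_pow k (by have := Finset.mem_range.mp hk; omega)]
  -- linear independence of w 0, ..., w (n-1)
  have key : ∀ k : ℕ, k ≤ n → LinearIndependent K (fun j : Fin k => w (j : ℕ)) := by
    intro k
    induction k with
    | zero => intro _; exact linearIndependent_empty_type
    | succ k ih =>
      intro hk
      have hkn : k < n := hk
      have hprev := ih (Nat.le_of_succ_le hk)
      have hsnoc : (fun j : Fin (k + 1) => w (j : ℕ))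
          = Fin.snoc (fun j : Fin k => w (j : ℕ)) (w k) := by
        funext j
        refine Fin.lastCases ?_ (fun j => ?_) j
        · simp
        · simp
      rw [hsnoc, linearIndependent_fin_snoc]
      refine ⟨hprev, fun hmem => ?_⟩
      -- derive a contradiction from w k ∈ span of previous
      rcases Nat.eq_zero_or_pos k with hk0 | hk0
      · subst hk0
        simp only [Set.range_eq_empty, Submodule.span_empty, Submodule.mem_bot] at hmem
        exact hv0 (hw0 ▸ hmem)
      set U : Submodule K (Fin n → K) :=
        Submodule.span K (Set.range fun j : Fin k => w (j : ℕ)) with hU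
      have hvU : v ∈ U := by
        rw [← hw0]
        exact Submodule.subset_span ⟨⟨0, hk0⟩, rfl⟩
      have hUD : ∀ x ∈ U, (a - b).mulVec x = 0 := by
        intro x hx
        have hle : U ≤ LinearMap.ker (Matrix.toLin' (a - b)) := by
          rw [hU, Submodule.span_le]
          rintro - ⟨j, rfl⟩
          rw [SetLike.mem_coe, LinearMap.mem_ker, Matrix.toLin'_apply]
          exact hvκ j (by have := j.2; omega)
        have h := hle hx
        rw [LinearMap.mem_ker, Matrix.toLin'_apply] at h
        exact h
      have hUA : ∀ x ∈ U, (Matrix.toLinAlgEquiv' a) x ∈ U := by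
        intro x hx
        have hle : U ≤ Submodule.comap (Matrix.toLinAlgEquiv' a : (Fin n → K) →ₗ[K] _) U := by
          rw [hU, Submodule.span_le]
          rintro - ⟨j, rfl⟩
          rw [SetLike.mem_coe, Submodule.mem_comap]
          show a.mulVec (w (j : ℕ)) ∈ U
          rw [hw_a]
          rcases Nat.lt_or_ge ((j : ℕ) + 1) k with hlt | hge
          · exact Submodule.subset_span ⟨⟨(j : ℕ) + 1, hlt⟩, rfl⟩
          · have hjk : (j : ℕ) + 1 = k := by have := j.2; omega
            rw [hjk]
            exact hmem
        exact hle hx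
      have hUB : ∀ x ∈ U, (Matrix.toLinAlgEquiv' b) x ∈ U := by
        intro x hx
        have h1 : (Matrix.toLinAlgEquiv' b) x = (Matrix.toLinAlgEquiv' a) x := by
          show b.mulVec x = a.mulVec x
          have h := hUD x hx
          rw [Matrix.sub_mulVec] at h
          exact (sub_eq_zero.mp h).symm
        rw [h1]
        exact hUA x hx
      set A' := (Matrix.toLinAlgEquiv' a : (Fin n → K) →ₗ[K] _).restrict hUA with hA'
      set B' := (Matrix.toLinAlgEquiv' b : (Fin n → K) →ₗ[K] _).restrict hUB with hB'
      have hAB : A' = B' := by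
        refine LinearMap.ext fun x => Subtype.ext ?_
        rw [hA', hB']
        simp only [LinearMap.restrict_coe_apply]
        show a.mulVec x = b.mulVec x
        have h := hUD x x.2
        rw [Matrix.sub_mulVec] at h
        exact sub_eq_zero.mp h
      have haevA : Polynomial.aeval A' f = 0 := by
        have h2 : Polynomial.aeval (Matrix.toLinAlgEquiv' a) f = 0 := by
          rw [Polynomial.aeval_algHom_apply Matrix.toLinAlgEquiv' a f, hfa, map_zero]
        refine LinearMap.ext fun x => Subtype.ext ?_
        rw [hA']
        have h1 := aeval_restrict_coe (Matrix.toLinAlgEquiv' a : (Fin n → K) →ₗ[K] _)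
          U hUA f x
        rw [h2] at h1
        simpa using h1
      have haevB : Polynomial.aeval B' g = 0 := by
        have h2 : Polynomial.aeval (Matrix.toLinAlgEquiv' b) g = 0 := by
          rw [Polynomial.aeval_algHom_apply Matrix.toLinAlgEquiv' b g, hgb, map_zero]
        refine LinearMap.ext fun x => Subtype.ext ?_
        rw [hB']
        have h1 := aeval_restrict_coe (Matrix.toLinAlgEquiv' b : (Fin n → K) →ₗ[K] _)
          U hUB g x
        rw [h2] at h1
        simpa using h1
      have hdvdf : minpoly K A' ∣ f := minpoly.dvd K A' haevA
      have hdvdg : minpoly K A' ∣ g := by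
        rw [hAB]
        exact minpoly.dvd K B' haevB
      have hu := hcop.isUnit_of_dvd' hdvdf hdvdg
      obtain ⟨r, hr, hCr⟩ := Polynomial.isUnit_iff.mp hu
      have h0 := minpoly.aeval K A'
      rw [← hCr, Polynomial.aeval_C] at h0
      have h4 : (algebraMap K (Module.End K U) r) ⟨v, hvU⟩ = 0 := by rw [h0]; rfl
      rw [Module.algebraMap_end_apply] at h4
      rcases smul_eq_zero.mp h4 with hr0 | hx0
      · exact hr.ne_zero hr0
      · exact hv0 (by simpa using congrArg (Subtype.val) hx0)
  have hLI : LinearIndependent K (fun j : Fin n => w (j : ℕ)) := key n le_rfl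
  -- the change of basis matrix
  set S : Matrix (Fin n) (Fin n) K := Matrix.of fun i j => w (j : ℕ) i with hS
  have hSu : IsUnit S := by
    rw [← Matrix.linearIndependent_cols_iff_isUnit]
    have hcols : (fun j : Fin n => Sᵀ j) = fun j : Fin n => w (j : ℕ) := by
      funext j
      funext i
      rfl
    show LinearIndependent K (fun j : Fin n => Sᵀ j)
    rw [hcols]
    exact hLI
  have hdet : IsUnit S.det := (Matrix.isUnit_iff_isUnit_det S).mp hSu
  -- the two intertwining identities
  have hrow : ∀ (M : Matrix (Fin n) (Fin n) K) (i : Fin n) (j : Fin n),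
      (M * S) i j = (M.mulVec (w (j : ℕ))) i := by
    intro M i j
    rw [Matrix.mul_apply]
    rfl
  have hcomp : ∀ (p : Polynomial K) (i j : Fin n), (S * companionMatrix n p) i j
      = if (j : ℕ) + 1 = n then (-∑ k ∈ Finset.range n, p.coeff k • w k) i
        else w ((j : ℕ) + 1) i := by
    intro p i j
    rw [Matrix.mul_apply]
    by_cases hj : (j : ℕ) + 1 = n
    · simp only [companionMatrix, Matrix.of_apply, hj, if_true]
      simp only [Pi.neg_apply, Finset.sum_apply, Pi.smul_apply, smul_eq_mul]
      rw [← Fin.sum_univ_eq_sum_range (fun k => p.coeff k * w k i) n,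
        ← Finset.sum_neg_distrib]
      refine Finset.sum_congr rfl fun k _ => ?_
      simp only [hS, Matrix.of_apply]
      ring
    · have hlt : (j : ℕ) + 1 < n := by have := j.2; omega
      simp only [companionMatrix, Matrix.of_apply, hj, if_false]
      rw [Finset.sum_congr rfl (fun k _ => show S i k * (if (k : ℕ) = (j : ℕ) + 1 then (1:K) else 0)
          = if k = (⟨(j : ℕ) + 1, hlt⟩ : Fin n) then S i k else 0 from by
        simp only [show ((k : ℕ) = (j : ℕ) + 1) ↔ k = (⟨(j : ℕ) + 1, hlt⟩ : Fin n) from by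
            simp [Fin.ext_iff], mul_ite, mul_one, mul_zero])]
      rw [Finset.sum_ite_eq' Finset.univ (⟨(j : ℕ) + 1, hlt⟩ : Fin n) (fun k => S i k)]
      simp [hS]
  have haS : a * S = S * companionMatrix n f := by
    ext i j
    rw [hrow, hcomp]
    by_cases hj : (j : ℕ) + 1 = n
    · rw [if_pos hj, hw_a, hj, hwn_a]
    · rw [if_neg hj, hw_a]
  have hbS : b * S = S * companionMatrix n g := by
    ext i j
    rw [hrow, hcomp]
    by_cases hj : (j : ℕ) + 1 = n
    · rw [if_pos hj]
      have hj' : (j : ℕ) = n - 1 := by omega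
      rw [hj', hwn_b]
    · rw [if_neg hj, hw_b j (by have := j.2; omega)]
  refine ⟨S⁻¹, Matrix.isUnit_nonsing_inv_iff.mpr hSu, ?_, ?_⟩
  · rw [Matrix.nonsing_inv_nonsing_inv _ hdet, Matrix.mul_assoc, haS, ← Matrix.mul_assoc,
      Matrix.nonsing_inv_mul _ hdet, Matrix.one_mul]
  · rw [Matrix.nonsing_inv_nonsing_inv _ hdet, Matrix.mul_assoc, hbS, ← Matrix.mul_assoc,
      Matrix.nonsing_inv_mul _ hdet, Matrix.one_mul]
end

section
/- Let K be a field, let a_1, …, a_n, b_1, …, b_n ∈ K satisfy a_i ≠ b_j for all i, j, and let a, b be linear endomorphisms of V = K^n whose characteristic polynomials are f(t) = ∏ (t − a_i) and g(t) = ∏ (t − b_j) respectively. Suppose W = ker(a − b) has dimension at least n − 1. Let X = ⋂_{i=0}^{n-2} a^{-i}(W). Then X ≠ 0, and every nonzero vector v ∈ X is a cyclic vector for a, i.e., v, a v, …, a^{n-1} v form a basis of V. -/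
open Polynomial Module

/-- Let `a, b` be endomorphisms of `V = Kⁿ` with characteristic polynomials
`∏(t - αᵢ)` and `∏(t - βⱼ)` where `αᵢ ≠ βⱼ`, and suppose `W = ker(a - b)` has dimension
at least `n - 1`.  Then `X = ⋂_{i=0}^{n-2} a⁻ⁱ(W)` is nonzero and every nonzero `v ∈ X`
is a cyclic vector for `a`: the vectors `v, a v, …, a^{n-1} v` form a basis of `V`. -/
theorem stmt_16 {K : Type*} [Field K] (n : ℕ) (hn : 0 < n) (α β : Fin n → K)
    (hαβ : ∀ i j, α i ≠ β j)
    (a b : (Fin n → K) →ₗ[K] (Fin n → K))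
    (hca : LinearMap.charpoly a = ∏ i : Fin n, (Polynomial.X - Polynomial.C (α i)))
    (hcb : LinearMap.charpoly b = ∏ j : Fin n, (Polynomial.X - Polynomial.C (β j)))
    (W : Submodule K (Fin n → K)) (hW : W = LinearMap.ker (a - b))
    (hWdim : n - 1 ≤ Module.finrank K W)
    (X : Submodule K (Fin n → K))
    (hX : X = ⨅ i ∈ Finset.range (n - 1), Submodule.comap (a ^ i) W) :
    X ≠ ⊥ ∧
    ∀ v ∈ X, v ≠ 0 →
      LinearIndependent K (fun i : Fin n => (a ^ (i : ℕ)) v) ∧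
      Submodule.span K (Set.range fun i : Fin n => (a ^ (i : ℕ)) v) = ⊤ := by
  classical
  have hfin : Module.finrank K (Fin n → K) = n := Module.finrank_fin_fun K
  -- each preimage has codimension at most 1
  have hcomap : ∀ i : ℕ, n - 1 ≤ finrank K ↥(Submodule.comap (a ^ i) W) := by
    intro i
    have h1 : Submodule.comap (a ^ i) W = LinearMap.ker (W.mkQ ∘ₗ (a ^ i)) := by
      rw [LinearMap.ker_comp, Submodule.ker_mkQ]
    have h2 := LinearMap.finrank_range_add_finrank_ker (W.mkQ ∘ₗ (a ^ i))
    have h3 : finrank K ↥(LinearMap.range (W.mkQ ∘ₗ (a ^ i)))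
        ≤ finrank K ((Fin n → K) ⧸ W) := (LinearMap.range _).finrank_le
    have h4 := Submodule.finrank_quotient_add_finrank W
    rw [hfin] at h2 h4
    rw [h1]
    omega
  -- intersection of finitely many such
  have hinf : ∀ s : Finset ℕ,
      n ≤ finrank K ↥(⨅ i ∈ s, Submodule.comap (a ^ i) W) + s.card := by
    intro s
    induction s using Finset.induction with
    | empty =>
      rw [show (⨅ i ∈ (∅ : Finset ℕ), Submodule.comap (a ^ i) W) = ⊤ by simp]
      rw [finrank_top, hfin]
      simp
    | @insert j s hj ih =>
      rw [Finset.iInf_insert]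
      have h5 := Submodule.finrank_sup_add_finrank_inf_eq
        (Submodule.comap (a ^ j) W) (⨅ i ∈ s, Submodule.comap (a ^ i) W)
      have h6 : finrank K ↥(Submodule.comap (a ^ j) W ⊔ ⨅ i ∈ s, Submodule.comap (a ^ i) W)
          ≤ finrank K (Fin n → K) := Submodule.finrank_le _
      have h7 := hcomap j
      rw [Finset.card_insert_of_notMem hj]
      omega
  refine ⟨?_, ?_⟩
  · intro hXbot
    have h8 := hinf (Finset.range (n - 1))
    rw [← hX, hXbot, Finset.card_range] at h8
    simp [finrank_bot] at h8
    omega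
  · intro v hv hv0
    have hvW : ∀ i < n - 1, (a ^ i) v ∈ W := by
      rw [hX] at hv
      simp only [Submodule.mem_iInf, Submodule.mem_comap, Finset.mem_range] at hv
      exact fun i hi => hv i hi
    have hcop : IsCoprime (LinearMap.charpoly a) (LinearMap.charpoly b) := by
      rw [hca, hcb]
      refine IsCoprime.prod_left fun i _ => IsCoprime.prod_right fun j _ => ?_
      exact Polynomial.isCoprime_X_sub_C_of_isUnit_sub
        (IsUnit.mk0 _ (sub_ne_zero_of_ne (hαβ i j)))
    have hli : LinearIndependent K (fun i : Fin n => (a ^ (i : ℕ)) v) := by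
      by_contra hdep
      obtain ⟨c, hsum, i₀, hi₀⟩ := Fintype.not_linearIndependent_iff.mp hdep
      set s : Finset (Fin n) := Finset.univ.filter (fun i => c i ≠ 0) with hs_def
      have hs : s.Nonempty := ⟨i₀, by simp [hs_def, hi₀]⟩
      set m : Fin n := s.max' hs with hm_def
      have hcm : c m ≠ 0 := (Finset.mem_filter.mp (s.max'_mem hs)).2
      have hle : ∀ i, c i ≠ 0 → i ≤ m := fun i hi =>
        Finset.le_max' s i (by simp [hs_def, hi])
      set M : Submodule K (Fin n → K) :=
        Submodule.span K ((fun k : ℕ => (a ^ k) v) '' {k | k < (m : ℕ)}) with hM_def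
      -- a^m v ∈ M
      have ham : (a ^ (m : ℕ)) v ∈ M := by
        have hsplit := Finset.add_sum_erase Finset.univ
          (fun i : Fin n => c i • (a ^ (i : ℕ)) v) (Finset.mem_univ m)
        rw [hsum] at hsplit
        have h9 : c m • (a ^ (m : ℕ)) v
            = - ∑ i ∈ Finset.univ.erase m, c i • (a ^ (i : ℕ)) v := by
          linear_combination (norm := module) hsplit
        have h10 : (a ^ (m : ℕ)) v = (c m)⁻¹ • (c m • (a ^ (m : ℕ)) v) := by
          rw [smul_smul, inv_mul_cancel₀ hcm, one_smul]
        rw [h10, h9]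
        refine M.smul_mem _ (M.neg_mem (Submodule.sum_mem _ fun i hi => ?_))
        by_cases hci : c i = 0
        · rw [hci, zero_smul]; exact M.zero_mem
        · refine M.smul_mem _ (Submodule.subset_span ⟨(i : ℕ), ?_, rfl⟩)
          have := hle i hci
          have hne := (Finset.mem_erase.mp hi).1
          exact lt_of_le_of_ne (by exact_mod_cast this) (by simpa [Fin.val_eq_val] using hne)
      -- M is a-invariant
      have haM : ∀ u ∈ M, a u ∈ M := by
        intro u hu
        induction hu using Submodule.span_induction with
        | mem x hx =>
          obtain ⟨k, hk, rfl⟩ := hx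
          have hk1 : k + 1 ≤ (m : ℕ) := hk
          have : a ((a ^ k) v) = (a ^ (k + 1)) v := by
            rw [pow_succ']; rfl
          rw [this]
          rcases lt_or_eq_of_le hk1 with h | h
          · exact Submodule.subset_span ⟨k + 1, h, rfl⟩
          · rw [h]; exact ham
        | zero => rw [map_zero]; exact M.zero_mem
        | add x y _ _ hx hy => rw [map_add]; exact M.add_mem hx hy
        | smul r x _ hx => rw [map_smul]; exact M.smul_mem r hx
      -- v ∈ M
      have hvM : v ∈ M := by
        rcases Nat.eq_zero_or_pos (m : ℕ) with h | h
        · exfalso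
          apply hv0
          have : M = ⊥ := by
            rw [hM_def]
            convert Submodule.span_empty
            simp [h]
          have := ham
          rw [h, pow_zero] at this
          simpa [‹M = ⊥›] using this
        · exact Submodule.subset_span ⟨0, h, rfl⟩
      have hmem : ∀ k : ℕ, (a ^ k) v ∈ M := by
        intro k
        induction k with
        | zero => simpa using hvM
        | succ k ih =>
          have : (a ^ (k + 1)) v = a ((a ^ k) v) := by rw [pow_succ']; rfl
          rw [this]; exact haM _ ih
      -- M ⊆ W
      have hMW : M ≤ W := by
        rw [hM_def, Submodule.span_le]
        rintro x ⟨k, hk, rfl⟩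
        have hk' : k < (m : ℕ) := hk
        have hmn : (m : ℕ) < n := m.isLt
        exact hvW k (by omega)
      have hkerW : ∀ k : ℕ, a ((a ^ k) v) = b ((a ^ k) v) := by
        intro k
        have := hMW (hmem k)
        rw [hW, LinearMap.mem_ker, LinearMap.sub_apply, sub_eq_zero] at this
        exact this
      have hab : ∀ k : ℕ, (b ^ k) v = (a ^ k) v := by
        intro k
        induction k with
        | zero => simp
        | succ k ih =>
          have h1 : (b ^ (k + 1)) v = b ((b ^ k) v) := by rw [pow_succ']; rfl
          have h2 : (a ^ (k + 1)) v = a ((a ^ k) v) := by rw [pow_succ']; rfl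
          rw [h1, h2, ih, hkerW k]
      have haev : ∀ p : Polynomial K, (Polynomial.aeval a p) v = (Polynomial.aeval b p) v := by
        intro p
        rw [Polynomial.aeval_eq_sum_range, Polynomial.aeval_eq_sum_range]
        simp [LinearMap.sum_apply, LinearMap.smul_apply, hab]
      have hga : (Polynomial.aeval a (LinearMap.charpoly b)) v = 0 := by
        rw [haev, LinearMap.aeval_self_charpoly]; rfl
      have hfa : (Polynomial.aeval a (LinearMap.charpoly a)) v = 0 := by
        rw [LinearMap.aeval_self_charpoly]; rfl
      obtain ⟨p, q, hpq⟩ := hcop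
      apply hv0
      calc v = (Polynomial.aeval a 1) v := by simp
        _ = (Polynomial.aeval a (p * LinearMap.charpoly a + q * LinearMap.charpoly b)) v := by
            rw [hpq]
        _ = (Polynomial.aeval a p) ((Polynomial.aeval a (LinearMap.charpoly a)) v)
            + (Polynomial.aeval a q) ((Polynomial.aeval a (LinearMap.charpoly b)) v) := by
            simp [map_add, map_mul, Module.End.mul_apply, LinearMap.add_apply]
        _ = 0 := by rw [hfa, hga]; simp
    have : Nonempty (Fin n) := ⟨⟨0, hn⟩⟩
    refine ⟨hli, hli.span_eq_top_of_card_eq_finrank ?_⟩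
    simp [hfin]
end
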